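/- arXiv:2305.08467 — 8 statements merged into one kernel-verified Lean document; each statement's English description precedes it below -/
import Mathlib

section
/- Let ℏ > 0 and σ, γ, η ∈ ℝ. Suppose a, P, Q, c, D, φ : I → ℝ are differentiable real-valued functions on an open interval I with a(t) > 0 for all t ∈ I, satisfying the ODE system a'(t) = 2σ² − (γ²η²/2)a(t)², P'(t) = −(γ²η²/2)a(t)P(t), Q'(t) = −(2σ²/a(t))Q(t) − η, c'(t) = −(σ²/a(t))c(t), D'(t) = (σ²/2)Q(t)² + (γ²η²/2)P(t)², and φ'(t) = Q'(t)P(t) + ηP(t). Then the complex-valued function w(t,p) = c(t)·exp((−D(t) + i·φ(t))/ℏ)·exp(−i·Q(t)·p/ℏ)·exp(−(p − P(t))²/(ℏ·a(t))) satisfies, for all t ∈ I and p ∈ ℝ, the partial differential equation ℏ·∂ₜw(t,p) = (ℏ²σ²/2)·∂ₚ²w(t,p) − (γ²η²/2)·p²·w(t,p) + i·η·p·w(t,p). -/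
/-!
Writing `w = c · exp E` with `E` quadratic in `p`, one has `∂ₚ²w = (E_p² + E_pp) w` and
`∂ₜw = (c' + c E_t) exp E`. After cancelling `exp E`, the equation becomes a polynomial identity in
`p` whose `p²`, `p` and constant coefficients balance exactly by the equations for `a`, for
`P` and `Q`, and for `c`, `D` and `φ`, respectively.
-/

open Complex

theorem iteratedDeriv_two_const_mul_cexp {u u' : ℝ → ℂ} {u'' : ℂ} {x : ℝ} (K : ℂ)
    (hu : ∀ y, HasDerivAt u (u' y) y) (hu' : HasDerivAt u' u'' x) :
    iteratedDeriv 2 (fun y => K * exp (u y)) x = K * exp (u x) * (u' x ^ 2 + u'') := by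
  have hderiv : deriv (fun y => K * exp (u y)) = fun y => K * exp (u y) * u' y :=
    funext fun y => ((hu y).cexp.const_mul K).deriv.trans (mul_assoc _ _ _).symm
  rw [iteratedDeriv_succ, iteratedDeriv_one, hderiv]
  exact (((hu x).cexp.const_mul K).mul hu').deriv.trans (by ring)

noncomputable def wavePacketExponent (hbar : ℝ) (a P Q D φ : ℝ → ℝ) (t p : ℝ) : ℂ :=
  (-(D t : ℂ) + I * φ t) / hbar + -I * Q t * p / hbar + -((p : ℂ) - P t) ^ 2 / (hbar * a t)

section WavePacketExponent

variable (hbar : ℝ) (a P Q D φ : ℝ → ℝ)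

theorem hasDerivAt_wavePacketExponent_space (t p : ℝ) :
    HasDerivAt (wavePacketExponent hbar a P Q D φ t)
      (-I * Q t / hbar - 2 * ((p : ℂ) - P t) / (hbar * a t)) p := by
  have hp : HasDerivAt (fun x : ℝ => (x : ℂ)) 1 p := ofRealCLM.hasDerivAt
  have := (((hp.const_mul (-I * Q t)).div_const hbar).const_add ((-(D t : ℂ) + I * φ t) / hbar)).add
    (((hp.sub_const (P t : ℂ)).pow 2).neg.div_const (hbar * a t))
  exact this.congr_deriv (by ring)

theorem hasDerivAt_wavePacketExponent_space_deriv (t p : ℝ) :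
    HasDerivAt (fun x : ℝ => -I * Q t / hbar - 2 * ((x : ℂ) - P t) / (hbar * a t))
      (-2 / (hbar * a t)) p := by
  have hp : HasDerivAt (fun x : ℝ => (x : ℂ)) 1 p := ofRealCLM.hasDerivAt
  exact ((((hp.sub_const (P t : ℂ)).const_mul 2).div_const (hbar * a t)).const_sub _).congr_deriv
    (by ring)

theorem hasDerivAt_wavePacketExponent_time {t a' P' Q' D' φ' : ℝ} (p : ℝ)
    (ha : HasDerivAt a a' t) (hP : HasDerivAt P P' t) (hQ : HasDerivAt Q Q' t)
    (hD : HasDerivAt D D' t) (hφ : HasDerivAt φ φ' t) (hat : a t ≠ 0) :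
    HasDerivAt (fun s => wavePacketExponent hbar a P Q D φ s p)
      ((-(D' : ℂ) + I * φ') / hbar - I * Q' * p / hbar
        + (2 * ((p : ℂ) - P t) * P' * a t + ((p : ℂ) - P t) ^ 2 * a') / (hbar * a t ^ 2)) t := by
  have hinv : HasDerivAt (fun s => ((a s)⁻¹ : ℂ)) (-(a' : ℂ) / (a t) ^ 2) t := by
    simpa using (ha.inv hat).ofReal_comp
  have := ((hD.ofReal_comp.fun_neg.fun_add (hφ.ofReal_comp.const_mul I)).div_const hbar).fun_add
    ((((hQ.ofReal_comp.const_mul (-I)).mul_const (p : ℂ)).div_const hbar).fun_add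
      ((((hP.ofReal_comp.const_sub (p : ℂ)).fun_pow 2).fun_neg.div_const hbar).fun_mul hinv))
  refine (this.congr_deriv ?_).congr_of_eventuallyEq (.of_forall fun s => ?_)
  · have : (a t : ℂ) ≠ 0 := ofReal_ne_zero.mpr hat
    field_simp
    ring
  · simp only [wavePacketExponent, div_eq_mul_inv, mul_inv]
    ring

end WavePacketExponent

theorem stmt0_general (hbar σ γ η : ℝ) (hhbar : 0 < hbar)
    (S : Set ℝ)
    (a P Q c D φ : ℝ → ℝ)
    (ha_pos : ∀ t ∈ S, 0 < a t)
    (ha : ∀ t ∈ S, HasDerivAt a (2 * σ ^ 2 - γ ^ 2 * η ^ 2 / 2 * (a t) ^ 2) t)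
    (hP : ∀ t ∈ S, HasDerivAt P (-(γ ^ 2 * η ^ 2 / 2) * a t * P t) t)
    (hQ : ∀ t ∈ S, HasDerivAt Q (-(2 * σ ^ 2 / a t) * Q t - η) t)
    (hc : ∀ t ∈ S, HasDerivAt c (-(σ ^ 2 / a t) * c t) t)
    (hD : ∀ t ∈ S, HasDerivAt D (σ ^ 2 / 2 * (Q t) ^ 2 + γ ^ 2 * η ^ 2 / 2 * (P t) ^ 2) t)
    (hφ : ∀ t ∈ S, HasDerivAt φ (deriv Q t * P t + η * P t) t)
    (w : ℝ → ℝ → ℂ)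
    (hw : ∀ t p, w t p =
      (c t : ℂ) * Complex.exp ((-(D t : ℂ) + Complex.I * (φ t : ℂ)) / (hbar : ℂ)) *
        Complex.exp (-Complex.I * (Q t : ℂ) * (p : ℂ) / (hbar : ℂ)) *
        Complex.exp (-((p : ℂ) - (P t : ℂ)) ^ 2 / ((hbar : ℂ) * (a t : ℂ)))) :
    ∀ t ∈ S, ∀ p : ℝ,
      (hbar : ℂ) * deriv (fun s => w s p) t =
        ((hbar ^ 2 * σ ^ 2 / 2 : ℝ) : ℂ) * iteratedDeriv 2 (fun p' : ℝ => w t p') p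
          - ((γ ^ 2 * η ^ 2 / 2 : ℝ) : ℂ) * (p : ℂ) ^ 2 * w t p
          + Complex.I * (η : ℂ) * (p : ℂ) * w t p := by
  intro t ht p
  have hwE : ∀ s q, w s q = c s * exp (wavePacketExponent hbar a P Q D φ s q) := by
    intro s q
    rw [hw, wavePacketExponent, exp_add, exp_add]
    ring
  have hat := (ha_pos t ht).ne'
  have hEt := hasDerivAt_wavePacketExponent_time hbar a P Q D φ p (ha t ht) (hP t ht) (hQ t ht)
    (hD t ht) (hφ t ht) hat
  have htime := ((hc t ht).ofReal_comp.fun_mul hEt.cexp).deriv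
  have hspace := iteratedDeriv_two_const_mul_cexp (c t : ℂ)
    (hasDerivAt_wavePacketExponent_space hbar a P Q D φ t)
    (hasDerivAt_wavePacketExponent_space_deriv hbar a P Q t p)
  simp only [hwE]
  rw [htime, hspace, (hQ t ht).deriv]
  have : (a t : ℂ) ≠ 0 := ofReal_ne_zero.mpr hat
  have : (hbar : ℂ) ≠ 0 := ofReal_ne_zero.mpr hhbar.ne'
  push_cast
  field_simp
  linear_combination (-(c t : ℂ) * σ ^ 2 * a t ^ 2 * Q t ^ 2) * I_sq

/-- The Gaussian wave-packet Ansatz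
`w(t,p) = c(t)·exp((−D(t)+i·φ(t))/ℏ)·exp(−i·Q(t)·p/ℏ)·exp(−(p−P(t))²/(ℏ·a(t)))`
solves the partially Fourier-transformed Lindblad equation
`ℏ ∂ₜ w = (ℏ²σ²/2) ∂ₚ² w − (γ²η²/2) p² w + i η p w`
whenever the parameters satisfy the stated ODE system on an open interval `S`. -/
theorem stmt0 (hbar σ γ η : ℝ) (hhbar : 0 < hbar)
    (S : Set ℝ) (hS : IsOpen S)
    (a P Q c D φ : ℝ → ℝ)
    (ha_pos : ∀ t ∈ S, 0 < a t)
    (ha : ∀ t ∈ S, HasDerivAt a (2 * σ ^ 2 - γ ^ 2 * η ^ 2 / 2 * (a t) ^ 2) t)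
    (hP : ∀ t ∈ S, HasDerivAt P (-(γ ^ 2 * η ^ 2 / 2) * a t * P t) t)
    (hQ : ∀ t ∈ S, HasDerivAt Q (-(2 * σ ^ 2 / a t) * Q t - η) t)
    (hc : ∀ t ∈ S, HasDerivAt c (-(σ ^ 2 / a t) * c t) t)
    (hD : ∀ t ∈ S, HasDerivAt D (σ ^ 2 / 2 * (Q t) ^ 2 + γ ^ 2 * η ^ 2 / 2 * (P t) ^ 2) t)
    (hφ : ∀ t ∈ S, HasDerivAt φ (deriv Q t * P t + η * P t) t)
    (w : ℝ → ℝ → ℂ)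
    (hw : ∀ t p, w t p =
      (c t : ℂ) * Complex.exp ((-(D t : ℂ) + Complex.I * (φ t : ℂ)) / (hbar : ℂ)) *
        Complex.exp (-Complex.I * (Q t : ℂ) * (p : ℂ) / (hbar : ℂ)) *
        Complex.exp (-((p : ℂ) - (P t : ℂ)) ^ 2 / ((hbar : ℂ) * (a t : ℂ)))) :
    ∀ t ∈ S, ∀ p : ℝ,
      (hbar : ℂ) * deriv (fun s => w s p) t =
        ((hbar ^ 2 * σ ^ 2 / 2 : ℝ) : ℂ) * iteratedDeriv 2 (fun p' : ℝ => w t p') p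
          - ((γ ^ 2 * η ^ 2 / 2 : ℝ) : ℂ) * (p : ℂ) ^ 2 * w t p
          + Complex.I * (η : ℂ) * (p : ℂ) * w t p :=
  stmt0_general hbar σ γ η hhbar S a P Q c D φ ha_pos ha hP hQ hc hD hφ w hw
end

section
/- Fix real parameters σ > 0, γ > 0, g > 0 and η ≠ 0; set ω = σγη and β = 2σ²/g, and define u(t) = cosh(ωt) + (ω/β)sinh(ωt) and v(t) = cosh(ωt) + (β/ω)sinh(ωt), which satisfy u(t) ≥ 1 and v(t) ≥ 1 for all t ≥ 0. Let p₀, Q₀ ∈ ℝ. Then the functions a(t) = g·v(t)/u(t), P(t) = p₀/u(t), Q(t) = (Q₀ − ηβ(u(t) − 1)/ω²)/v(t), and c(t) = 1/√(v(t)) satisfy a(0) = g, P(0) = p₀, Q(0) = Q₀, c(0) = 1, and for every t ≥ 0: a'(t) = 2σ² − (γ²η²/2)a(t)², P'(t) = −(γ²η²/2)a(t)P(t), Q'(t) = −(2σ²/a(t))Q(t) − η, and c'(t) = −(σ²/a(t))c(t). -/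
/-!
The functions `u` and `v` solve the linear system `u' = B g v`, `v' = (A / g) u`,
`u 0 = v 0 = 1`, with `A = 2σ²` and `B = γ²η²/2`; and `u, v ≥ 1` for `t ≥ 0` because
`sinh (ω t)`, `ω / β` and `β / ω` all have the sign of `ω`. Writing `a = g v / u` is the
classical linearisation of the Riccati equation `a' = A - B a²`, and the remaining equations
for `P`, `Q`, `c` follow from the linear system by the quotient and chain rules alone.
-/

open Real

lemma hasDerivAt_cosh_add_mul_sinh (ω : ℝ) {k : ℝ} (hk : k ≠ 0) (t : ℝ) :
    HasDerivAt (fun s => cosh (ω * s) + k * sinh (ω * s))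
      (k * ω * (cosh (ω * t) + k⁻¹ * sinh (ω * t))) t := by
  have hlin : HasDerivAt (fun s => ω * s) ω t := by
    simpa using (hasDerivAt_id t).const_mul ω
  refine ((hasDerivAt_cosh _).comp t hlin).add
    (((hasDerivAt_sinh _).comp t hlin).const_mul k) |>.congr_deriv ?_
  field_simp
  ring

lemma one_le_cosh_add_mul_sinh {ω k t : ℝ} (hk : 0 ≤ k * ω) (ht : 0 ≤ t) :
    1 ≤ cosh (ω * t) + k * sinh (ω * t) := by
  have hsinh : 0 ≤ k * sinh (ω * t) := by
    rcases lt_trichotomy ω 0 with hω | rfl | hω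
    · have hk' : k ≤ 0 := nonpos_of_mul_nonneg_left hk hω
      exact mul_nonneg_of_nonpos_of_nonpos hk'
        (sinh_nonpos_iff.2 (mul_nonpos_of_nonpos_of_nonneg hω.le ht))
    · simp
    · have hk' : 0 ≤ k := nonneg_of_mul_nonneg_left hk hω
      exact mul_nonneg hk' (sinh_nonneg_iff.2 (mul_nonneg hω.le ht))
  linarith [one_le_cosh (ω * t)]

section LinearSystem

variable {A B g : ℝ} {u v : ℝ → ℝ}

lemma hasDerivAt_const_mul_div_of_linearSystem (hu' : ∀ t, HasDerivAt u (B * g * v t) t)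
    (hv' : ∀ t, HasDerivAt v (A / g * u t) t) (hg : g ≠ 0) {t : ℝ} (hut : u t ≠ 0) :
    HasDerivAt (fun s => g * v s / u s) (A - B * (g * v t / u t) ^ 2) t := by
  refine (((hv' t).const_mul g).div (hu' t) hut).congr_deriv ?_
  field_simp

lemma hasDerivAt_const_div_of_linearSystem (hu' : ∀ t, HasDerivAt u (B * g * v t) t)
    (p : ℝ) {t : ℝ} (hut : u t ≠ 0) :
    HasDerivAt (fun s => p / u s) (-B * (g * v t / u t) * (p / u t)) t := by
  refine ((hasDerivAt_const t p).div (hu' t) hut).congr_deriv ?_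
  field_simp
  ring

lemma hasDerivAt_affine_div_of_linearSystem (hu' : ∀ t, HasDerivAt u (B * g * v t) t)
    (hv' : ∀ t, HasDerivAt v (A / g * u t) t) (q η : ℝ) (hBg : B * g ≠ 0) {t : ℝ}
    (hvt : v t ≠ 0) :
    HasDerivAt (fun s => (q - η * (u s - 1) / (B * g)) / v s)
      (-(A / (g * v t / u t)) * ((q - η * (u t - 1) / (B * g)) / v t) - η) t := by
  have hB : B ≠ 0 := left_ne_zero_of_mul hBg
  have hg : g ≠ 0 := right_ne_zero_of_mul hBg
  have hnum : HasDerivAt (fun s => q - η * (u s - 1) / (B * g)) (-(η * v t)) t := by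
    refine ((((hu' t).sub_const 1).const_mul η).div_const (B * g)).const_sub q |>.congr_deriv ?_
    field_simp
  refine (hnum.div (hv' t) hvt).congr_deriv ?_
  field_simp
  ring

lemma hasDerivAt_one_div_sqrt_of_linearSystem (hv' : ∀ t, HasDerivAt v (A / g * u t) t)
    {t : ℝ} (hvt : 0 < v t) :
    HasDerivAt (fun s => 1 / √(v s)) (-(A / 2 / (g * v t / u t)) * (1 / √(v t))) t := by
  have hsqrt : √(v t) ≠ 0 := (sqrt_pos.2 hvt).ne'
  have hd : HasDerivAt (fun s => (√(v s))⁻¹) _ t :=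
    ((hasDerivAt_sqrt hvt.ne').comp t (hv' t)).inv hsqrt
  simp only [Function.comp_apply] at hd
  simp only [one_div]
  refine hd.congr_deriv ?_
  field_simp
  rw [sq_sqrt hvt.le]
  ring

end LinearSystem

/-- The explicit functions `a = g·v/u`, `P = p₀/u`,
`Q = (Q₀ − ηβ(u−1)/ω²)/v`, `c = 1/√v`, with
`u(t) = cosh(ωt) + (ω/β)sinh(ωt)`, `v(t) = cosh(ωt) + (β/ω)sinh(ωt)`,
`ω = σγη`, `β = 2σ²/g`, solve the parameter ODE system of the Gaussian
wave-packet Ansatz with initial data `a(0)=g, P(0)=p₀, Q(0)=Q₀, c(0)=1`. -/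
theorem stmt1 (σ γ g η : ℝ) (hσ : 0 < σ) (hγ : 0 < γ) (hg : 0 < g) (hη : η ≠ 0)
    (p₀ Q₀ : ℝ) (ω β : ℝ) (hω : ω = σ * γ * η) (hβ : β = 2 * σ ^ 2 / g)
    (u v a P Q c : ℝ → ℝ)
    (hu : ∀ t, u t = Real.cosh (ω * t) + (ω / β) * Real.sinh (ω * t))
    (hv : ∀ t, v t = Real.cosh (ω * t) + (β / ω) * Real.sinh (ω * t))
    (ha : ∀ t, a t = g * v t / u t)
    (hP : ∀ t, P t = p₀ / u t)
    (hQ : ∀ t, Q t = (Q₀ - η * β * (u t - 1) / ω ^ 2) / v t)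
    (hc : ∀ t, c t = 1 / Real.sqrt (v t)) :
    (∀ t ≥ 0, 1 ≤ u t ∧ 1 ≤ v t) ∧
    a 0 = g ∧ P 0 = p₀ ∧ Q 0 = Q₀ ∧ c 0 = 1 ∧
    ∀ t ≥ 0,
      HasDerivAt a (2 * σ ^ 2 - γ ^ 2 * η ^ 2 / 2 * (a t) ^ 2) t ∧
      HasDerivAt P (-(γ ^ 2 * η ^ 2 / 2) * a t * P t) t ∧
      HasDerivAt Q (-(2 * σ ^ 2 / a t) * Q t - η) t ∧
      HasDerivAt c (-(σ ^ 2 / a t) * c t) t := by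
  have hω0 : ω ≠ 0 := by rw [hω]; positivity
  have hβ0 : 0 < β := by rw [hβ]; positivity
  have hBg : γ ^ 2 * η ^ 2 / 2 * g = ω ^ 2 / β := by
    rw [hω, hβ]; field_simp
  have hu' : ∀ t, HasDerivAt u (γ ^ 2 * η ^ 2 / 2 * g * v t) t := fun t => by
    rw [funext hu, hBg, hv, ← inv_div ω β]
    convert hasDerivAt_cosh_add_mul_sinh ω (div_ne_zero hω0 hβ0.ne') t using 1
    ring
  have hv' : ∀ t, HasDerivAt v (2 * σ ^ 2 / g * u t) t := fun t => by
    rw [funext hv, ← hβ, hu, ← inv_div β ω]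
    convert hasDerivAt_cosh_add_mul_sinh ω (div_ne_zero hβ0.ne' hω0) t using 1
    rw [div_mul_cancel₀ β hω0]
  have huv : ∀ t ≥ 0, 1 ≤ u t ∧ 1 ≤ v t := fun t ht => by
    rw [hu, hv]
    exact ⟨one_le_cosh_add_mul_sinh (by rw [div_mul_eq_mul_div, ← sq]; positivity) ht,
      one_le_cosh_add_mul_sinh (by rw [div_mul_cancel₀ β hω0]; exact hβ0.le) ht⟩
  have hQ' : Q = fun s => (Q₀ - η * (u s - 1) / (γ ^ 2 * η ^ 2 / 2 * g)) / v s := by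
    funext s; rw [hQ, hBg]; field_simp
  obtain rfl : a = _ := funext ha
  obtain rfl : P = _ := funext hP
  obtain rfl : c = _ := funext hc
  subst hQ'
  have hu₀ : u 0 = 1 := by simp [hu]
  have hv₀ : v 0 = 1 := by simp [hv]
  refine ⟨huv, by simp [hu₀, hv₀], by simp [hu₀], by simp [hu₀, hv₀], by simp [hv₀],
    fun t ht => ?_⟩
  have hut : u t ≠ 0 := by linarith [(huv t ht).1]
  have hvt : 0 < v t := by linarith [(huv t ht).2]
  refine ⟨hasDerivAt_const_mul_div_of_linearSystem hu' hv' hg.ne' hut,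
    hasDerivAt_const_div_of_linearSystem hu' p₀ hut,
    hasDerivAt_affine_div_of_linearSystem hu' hv' Q₀ η (by positivity) hvt.ne', ?_⟩
  convert hasDerivAt_one_div_sqrt_of_linearSystem hv' hvt using 3
  ring
end

section
/- Fix real parameters σ > 0, γ > 0, g > 0 and η ≠ 0; set ω = σγη and β = 2σ²/g, and define u(s) = cosh(ωs) + (ω/β)sinh(ωs), v(s) = cosh(ωs) + (β/ω)sinh(ωs), a(s) = g·v(s)/u(s), P(s) = P₀/u(s), and Q(s) = (Q₀ − ηβ(u(s) − 1)/ω²)/v(s) for given P₀, Q₀ ∈ ℝ. Then for every t ≥ 0: (i) ∫₀ᵗ Q(s)² ds = (η²/ω²)·(t·v(t) − sinh(ωt)/ω − 2β(cosh(ωt) − 1)/ω²)/v(t) − 2ηQ₀·((cosh(ωt) − 1)/ω²)·(1/v(t)) + Q₀²·(sinh(ωt)/ω)·(1/v(t)); (ii) ∫₀ᵗ P(s)² ds = P₀²·(sinh(ωt)/ω)·(1/u(t)); (iii) ∫₀ᵗ Q(s)P(s)/a(s) ds = (P₀Q₀/g)·(sinh(ωt)/ω)·(1/v(t)) − (P₀η/g)·((cosh(ωt)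 − 1)/ω²)·(1/v(t)). -/
/-!
With `c = cosh (ω s)`, `h = sinh (ω s)` and `w = c + m h`, the identity `c² - h² = 1` gives
`(h / (ω w))' = 1 / w²` and `((c - 1) / (ω w))' = (h + m (c - 1)) / w²`, for every `m`.
Since `Q P / a = P₀ Q / (g v)`, the integrands of (ii) and (iii) are combinations of these two
derivatives (for `w = u` and `w = v`). In (i), expanding `Q²` also produces `β² (u - 1)² / (ω² v²)`,
which the relation `ω² (v² - 1) = β² (u² - 1)` rewrites as `1 - 1 / v² - 2 β² (u - 1) / (ω² v²)`.
All antiderivatives vanish at `0`; `u, v ≥ 1` on `[0, t]` keeps the quotients defined.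
-/

open Real Set intervalIntegral

/-- The paper's `u` and `v` are `coshAddSinh ω (ω / β)` and `coshAddSinh ω (β / ω)`. -/
noncomputable def coshAddSinh (ω m s : ℝ) : ℝ := cosh (ω * s) + m * sinh (ω * s)

section General

variable {ω m : ℝ}

@[simp]
theorem coshAddSinh_zero : coshAddSinh ω m 0 = 1 := by
  simp [coshAddSinh]

theorem one_le_coshAddSinh {s : ℝ} (hm : 0 < m * ω) (hs : 0 ≤ s) : 1 ≤ coshAddSinh ω m s := by
  have hmsinh : 0 ≤ m * sinh (ω * s) := by
    rcases le_or_gt 0 ω with hω | hω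
    · exact mul_nonneg (pos_of_mul_pos_left hm hω).le (sinh_nonneg_iff.2 (mul_nonneg hω hs))
    · exact mul_nonneg_of_nonpos_of_nonpos (neg_of_mul_pos_left hm hω.le).le
        (sinh_nonpos_iff.2 (mul_nonpos_of_nonpos_of_nonneg hω.le hs))
  linarith [one_le_cosh (ω * s), show coshAddSinh ω m s = cosh (ω * s) + m * sinh (ω * s) from rfl]

theorem coshAddSinh_pos {s : ℝ} (hm : 0 < m * ω) (hs : 0 ≤ s) : 0 < coshAddSinh ω m s :=
  zero_lt_one.trans_le (one_le_coshAddSinh hm hs)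

@[fun_prop]
theorem continuous_coshAddSinh : Continuous (coshAddSinh ω m) := by
  unfold coshAddSinh
  fun_prop

theorem hasDerivAt_coshAddSinh (x : ℝ) :
    HasDerivAt (coshAddSinh ω m) (ω * (sinh (ω * x) + m * cosh (ω * x))) x := by
  have hlin := (hasDerivAt_id' x).const_mul ω
  exact (hlin.cosh.add (hlin.sinh.const_mul m)).congr_deriv (by ring)

theorem hasDerivAt_sinh_div_coshAddSinh (hω : ω ≠ 0) {x : ℝ} (hx : coshAddSinh ω m x ≠ 0) :
    HasDerivAt (fun s => sinh (ω * s) / (ω * coshAddSinh ω m s))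
      (1 / coshAddSinh ω m x ^ 2) x := by
  have hlin := (hasDerivAt_id' x).const_mul ω
  refine (hlin.sinh.div ((hasDerivAt_coshAddSinh x).const_mul ω)
    (mul_ne_zero hω hx)).congr_deriv ?_
  field_simp
  unfold coshAddSinh
  linear_combination (cosh_sq_sub_sinh_sq (ω * x))

theorem hasDerivAt_cosh_sub_one_div_coshAddSinh (hω : ω ≠ 0) {x : ℝ}
    (hx : coshAddSinh ω m x ≠ 0) :
    HasDerivAt (fun s => (cosh (ω * s) - 1) / (ω * coshAddSinh ω m s))
      ((sinh (ω * x) + m * (cosh (ω * x) - 1)) / coshAddSinh ω m x ^ 2) x := by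
  have hlin := (hasDerivAt_id' x).const_mul ω
  refine ((hlin.cosh.sub_const 1).div ((hasDerivAt_coshAddSinh x).const_mul ω)
    (mul_ne_zero hω hx)).congr_deriv ?_
  field_simp
  unfold coshAddSinh
  linear_combination (-m) * cosh_sq_sub_sinh_sq (ω * x)

theorem sq_coshAddSinh_sub_one (hm : m ≠ 0) (s : ℝ) :
    coshAddSinh ω m s ^ 2 - 1 = m ^ 2 * (coshAddSinh ω m⁻¹ s ^ 2 - 1) := by
  unfold coshAddSinh
  field_simp
  linear_combination (1 - m ^ 2) * cosh_sq_sub_sinh_sq (ω * s)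

theorem coshAddSinh_ne_zero_of_mem_uIcc (hm : 0 < m * ω) {t x : ℝ} (ht : 0 ≤ t)
    (hx : x ∈ uIcc 0 t) : coshAddSinh ω m x ≠ 0 :=
  (coshAddSinh_pos hm (uIcc_of_le ht ▸ hx).1).ne'

theorem integral_div_coshAddSinh_sq (hω : ω ≠ 0) (hm : 0 < m * ω) {t : ℝ} (ht : 0 ≤ t) (C : ℝ) :
    ∫ s in (0 : ℝ)..t, (C / coshAddSinh ω m s) ^ 2 =
      C ^ 2 * (sinh (ω * t) / ω) * (1 / coshAddSinh ω m t) := by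
  have hw : ∀ x ∈ uIcc 0 t, coshAddSinh ω m x ≠ 0 := fun x hx =>
    coshAddSinh_ne_zero_of_mem_uIcc hm ht hx
  rw [integral_eq_sub_of_hasDerivAt
    (f := fun s => C ^ 2 * (sinh (ω * s) / (ω * coshAddSinh ω m s)))]
  · simp only [mul_zero, sinh_zero, coshAddSinh_zero, mul_one, zero_div, sub_zero, one_div]
    ring
  · intro x hx
    exact ((hasDerivAt_sinh_div_coshAddSinh hω (hw x hx)).const_mul (C ^ 2)).congr_deriv (by ring)
  · exact ContinuousOn.intervalIntegrable (by fun_prop (disch := exact hw))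

end General

section Pair

variable {ω β : ℝ}

theorem hasDerivAt_cosh_sub_one_div_pair (hω : ω ≠ 0) (hβ : β ≠ 0) {x : ℝ}
    (hx : coshAddSinh ω (β / ω) x ≠ 0) :
    HasDerivAt (fun s => (cosh (ω * s) - 1) / (ω * coshAddSinh ω (β / ω) s))
      (β / ω * (coshAddSinh ω (ω / β) x - 1) / coshAddSinh ω (β / ω) x ^ 2) x :=
  (hasDerivAt_cosh_sub_one_div_coshAddSinh hω hx).congr_deriv (by
    unfold coshAddSinh
    field_simp
    ring)

theorem integral_pair_div_sq (hω : ω ≠ 0) (hβ : 0 < β) {t : ℝ} (ht : 0 ≤ t) (Q₀ η : ℝ) :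
    ∫ s in (0 : ℝ)..t,
        (Q₀ - η * β * (coshAddSinh ω (ω / β) s - 1) / ω ^ 2) / coshAddSinh ω (β / ω) s ^ 2 =
      Q₀ * (sinh (ω * t) / ω) * (1 / coshAddSinh ω (β / ω) t)
        - η * ((cosh (ω * t) - 1) / ω ^ 2) * (1 / coshAddSinh ω (β / ω) t) := by
  have hv : ∀ x ∈ uIcc 0 t, coshAddSinh ω (β / ω) x ≠ 0 := fun x hx =>
    coshAddSinh_ne_zero_of_mem_uIcc (by rwa [div_mul_cancel₀ _ hω]) ht hx
  rw [integral_eq_sub_of_hasDerivAt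
    (f := fun s => Q₀ * (sinh (ω * s) / (ω * coshAddSinh ω (β / ω) s))
      - η / ω * ((cosh (ω * s) - 1) / (ω * coshAddSinh ω (β / ω) s)))]
  · simp only [mul_zero, sinh_zero, coshAddSinh_zero, mul_one, zero_div, cosh_zero, sub_self,
      sub_zero, one_div]
    ring
  · intro x hx
    refine (((hasDerivAt_sinh_div_coshAddSinh hω (hv x hx)).const_mul Q₀).sub
      ((hasDerivAt_cosh_sub_one_div_pair hω hβ.ne' (hv x hx)).const_mul (η / ω))).congr_deriv ?_
    field_simp
  · exact ContinuousOn.intervalIntegrable (by fun_prop (disch := simp_all))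

theorem integral_pair_sq (hω : ω ≠ 0) (hβ : 0 < β) {t : ℝ} (ht : 0 ≤ t) (Q₀ η : ℝ) :
    ∫ s in (0 : ℝ)..t,
        ((Q₀ - η * β * (coshAddSinh ω (ω / β) s - 1) / ω ^ 2) / coshAddSinh ω (β / ω) s) ^ 2 =
      (η ^ 2 / ω ^ 2) *
          ((t * coshAddSinh ω (β / ω) t - sinh (ω * t) / ω
            - 2 * β * (cosh (ω * t) - 1) / ω ^ 2) / coshAddSinh ω (β / ω) t)
        - 2 * η * Q₀ * ((cosh (ω * t) - 1) / ω ^ 2) * (1 / coshAddSinh ω (β / ω) t)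
        + Q₀ ^ 2 * (sinh (ω * t) / ω) * (1 / coshAddSinh ω (β / ω) t) := by
  have hv : ∀ x ∈ uIcc 0 t, coshAddSinh ω (β / ω) x ≠ 0 := fun x hx =>
    coshAddSinh_ne_zero_of_mem_uIcc (by rwa [div_mul_cancel₀ _ hω]) ht hx
  rw [integral_eq_sub_of_hasDerivAt (f := fun s =>
      η ^ 2 / ω ^ 2 * (s - sinh (ω * s) / (ω * coshAddSinh ω (β / ω) s)
        - 2 * β / ω * ((cosh (ω * s) - 1) / (ω * coshAddSinh ω (β / ω) s)))
      - 2 * η * Q₀ / ω * ((cosh (ω * s) - 1) / (ω * coshAddSinh ω (β / ω) s))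
      + Q₀ ^ 2 * (sinh (ω * s) / (ω * coshAddSinh ω (β / ω) s)))]
  · have hvt := hv t right_mem_uIcc
    simp only [mul_zero, sinh_zero, coshAddSinh_zero, mul_one, zero_div, sub_self, cosh_zero,
      add_zero, sub_zero, one_div]
    field_simp
  · intro x hx
    have hsinh := hasDerivAt_sinh_div_coshAddSinh hω (hv x hx)
    have hcosh := hasDerivAt_cosh_sub_one_div_pair hω hβ.ne' (hv x hx)
    refine ((((hasDerivAt_id x).sub hsinh).sub (hcosh.const_mul (2 * β / ω))).const_mul
      (η ^ 2 / ω ^ 2) |>.sub (hcosh.const_mul (2 * η * Q₀ / ω)) |>.add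
      (hsinh.const_mul (Q₀ ^ 2))).congr_deriv ?_
    have hsq := sq_coshAddSinh_sub_one (ω := ω) (div_ne_zero hβ.ne' hω) x
    rw [inv_div] at hsq
    have hvx := hv x hx
    field_simp at hsq ⊢
    linear_combination η ^ 2 * hsq
  · exact ContinuousOn.intervalIntegrable (by fun_prop (disch := simp_all))

end Pair

/-- Explicit integrals `∫₀ᵗ Q²`, `∫₀ᵗ P²` and `∫₀ᵗ QP/a` for the
explicit parameter solutions of the Gaussian wave-packet Ansatz. -/
theorem stmt5 (σ γ g η : ℝ) (hσ : 0 < σ) (hγ : 0 < γ) (hg : 0 < g) (hη : η ≠ 0)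
    (P₀ Q₀ : ℝ) (ω β : ℝ) (hω : ω = σ * γ * η) (hβ : β = 2 * σ ^ 2 / g)
    (u v a P Q : ℝ → ℝ)
    (hu : ∀ s, u s = Real.cosh (ω * s) + (ω / β) * Real.sinh (ω * s))
    (hv : ∀ s, v s = Real.cosh (ω * s) + (β / ω) * Real.sinh (ω * s))
    (ha : ∀ s, a s = g * v s / u s)
    (hP : ∀ s, P s = P₀ / u s)
    (hQ : ∀ s, Q s = (Q₀ - η * β * (u s - 1) / ω ^ 2) / v s) :
    ∀ t ≥ 0,
      (∫ s in (0:ℝ)..t, (Q s) ^ 2) =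
        (η ^ 2 / ω ^ 2) *
            ((t * v t - Real.sinh (ω * t) / ω - 2 * β * (Real.cosh (ω * t) - 1) / ω ^ 2) / v t)
          - 2 * η * Q₀ * ((Real.cosh (ω * t) - 1) / ω ^ 2) * (1 / v t)
          + Q₀ ^ 2 * (Real.sinh (ω * t) / ω) * (1 / v t) ∧
      (∫ s in (0:ℝ)..t, (P s) ^ 2) = P₀ ^ 2 * (Real.sinh (ω * t) / ω) * (1 / u t) ∧
      (∫ s in (0:ℝ)..t, Q s * P s / a s) =
        (P₀ * Q₀ / g) * (Real.sinh (ω * t) / ω) * (1 / v t)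
          - (P₀ * η / g) * ((Real.cosh (ω * t) - 1) / ω ^ 2) * (1 / v t) := by
  have hβ0 : 0 < β := by rw [hβ]; positivity
  have hω0 : ω ≠ 0 := by rw [hω]; positivity
  have hmu : 0 < ω / β * ω := by rw [div_mul_eq_mul_div]; exact div_pos (mul_self_pos.2 hω0) hβ0
  have hmv : 0 < β / ω * ω := by rwa [div_mul_cancel₀ _ hω0]
  obtain rfl : u = coshAddSinh ω (ω / β) := funext hu
  obtain rfl : v = coshAddSinh ω (β / ω) := funext hv
  intro t ht
  have hQPa : EqOn (fun s => Q s * P s / a s)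
      (fun s => P₀ / g * ((Q₀ - η * β * (coshAddSinh ω (ω / β) s - 1) / ω ^ 2) /
        coshAddSinh ω (β / ω) s ^ 2)) (uIcc 0 t) := fun s hs => by
    have hus := coshAddSinh_ne_zero_of_mem_uIcc hmu ht hs
    have hvs := coshAddSinh_ne_zero_of_mem_uIcc hmv ht hs
    simp only [hQ, hP, ha]
    field_simp
  refine ⟨?_, ?_, ?_⟩
  · simp_rw [hQ]
    exact integral_pair_sq hω0 hβ0 ht Q₀ η
  · simp_rw [hP]
    exact integral_div_coshAddSinh_sq hω0 hmu ht P₀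
  · rw [integral_congr hQPa, integral_const_mul, integral_pair_div_sq hω0 hβ0 ht]
    ring
end

section
/- Fix real parameters σ > 0, γ > 0, g > 0 and η ≠ 0; set ω = σγη and β = 2σ²/g, and define v(t) = cosh(ωt) + (β/ω)sinh(ωt) and D(t) = (1/(2γ²))·(t·v(t) − sinh(ωt)/ω − 2β(cosh(ωt) − 1)/ω²)/v(t) (this is the damping exponent in the case δq = p₀ = 0). Then as t → 0 the function t ↦ D(t) − (σ²η²/6)·t³ is O(t⁴), i.e. D(t) = (σ²η²/6)·t³ + O(t⁴). -/
/-!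
With `x = ω t`, the expansions `cosh x = 1 + x²/2 + O(x⁴)` and `sinh x = x + x³/6 + O(x⁵)` show
that the numerator `t v(t) - sinh(ω t)/ω - 2β(cosh(ω t) - 1)/ω²` equals `(ω² t³ / 3) v(t) + O(t⁴)`:
its terms of order `t`, `t²` and `t³` cancel against those of `(ω² t³ / 3) v(t)`, including every
contribution of `β`. Since `v(t) → 1`, dividing by `v` and using `ω² / (6γ²) = σ²η²/6` gives the
claim.
-/
open Topology Asymptotics Filter

namespace Asymptotics

lemma IsBigO.tendsto_mul_left {α R E : Type*} [SeminormedRing R] [Norm E] {l : Filter α}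
    {f h : α → R} {g : α → E} {c : R} (hh : Tendsto h l (𝓝 c)) (hf : f =O[l] g) :
    (fun x ↦ h x * f x) =O[l] g := by
  obtain ⟨C, hC⟩ := hh.norm.isBoundedUnder_le
  refine (IsBigO.of_bound C ?_).trans hf
  filter_upwards [hC] with x hx
  exact (norm_mul_le _ _).trans (mul_le_mul_of_nonneg_right hx (norm_nonneg _))

lemma IsBigO.comp_const_mul_pow {𝕜 E : Type*} [NormedField 𝕜] [SeminormedAddCommGroup E]
    {f : 𝕜 → E} {n : ℕ} (hf : f =O[𝓝 0] (· ^ n)) (c : 𝕜) :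
    (fun t ↦ f (c * t)) =O[𝓝 0] (· ^ n) := by
  have hc : Tendsto (c * ·) (𝓝 0) (𝓝 0) := by
    simpa using (continuous_const_mul c).tendsto 0
  refine (hf.comp_tendsto hc).trans ?_
  simpa [Function.comp_def, mul_pow] using
    (isBigO_refl (· ^ n) (𝓝 (0 : 𝕜))).const_mul_left (c ^ n)

end Asymptotics

namespace Real

lemma exp_neg_sub_sum_range_isBigO_pow (n : ℕ) :
    (fun x ↦ exp (-x) - ∑ i ∈ Finset.range n, (-x) ^ i / i.factorial) =O[𝓝 0] (· ^ n) := by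
  have hneg : Tendsto (fun x : ℝ ↦ -x) (𝓝 0) (𝓝 0) := by
    simpa using continuous_neg.tendsto (0 : ℝ)
  refine ((exp_sub_sum_range_isBigO_pow n).comp_tendsto hneg).trans (isBigO_of_le _ fun x ↦ ?_)
  simp [norm_pow]

lemma cosh_sub_isBigO_pow_four : (fun x ↦ cosh x - (1 + x ^ 2 / 2)) =O[𝓝 0] (· ^ 4) := by
  refine (((exp_sub_sum_range_isBigO_pow 4).add
    (exp_neg_sub_sum_range_isBigO_pow 4)).const_mul_left (1 / 2)).congr_left fun x ↦ ?_
  simp only [Finset.sum_range_succ, Finset.sum_range_zero, Nat.factorial, cosh_eq]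
  push_cast
  ring

lemma sinh_sub_isBigO_pow_five : (fun x ↦ sinh x - (x + x ^ 3 / 6)) =O[𝓝 0] (· ^ 5) := by
  refine (((exp_sub_sum_range_isBigO_pow 5).sub
    (exp_neg_sub_sum_range_isBigO_pow 5)).const_mul_left (1 / 2)).congr_left fun x ↦ ?_
  simp only [Finset.sum_range_succ, Finset.sum_range_zero, Nat.factorial, sinh_eq]
  push_cast
  ring

end Real

open Real in
lemma damping_numerator_sub_isBigO_pow_four {ω : ℝ} (hω : ω ≠ 0) (β : ℝ) :
    (fun t ↦ t * (cosh (ω * t) + β / ω * sinh (ω * t)) - sinh (ω * t) / ω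
      - 2 * β * (cosh (ω * t) - 1) / ω ^ 2
      - ω ^ 2 * t ^ 3 / 3 * (cosh (ω * t) + β / ω * sinh (ω * t))) =O[𝓝 0] (· ^ 4) := by
  have hc := cosh_sub_isBigO_pow_four.comp_const_mul_pow ω
  have hs := (sinh_sub_isBigO_pow_five.trans
    (isLittleO_pow_pow (m := 4) (by norm_num)).isBigO).comp_const_mul_pow ω
  -- Substituting the two expansions, the expression is `a t * Rcosh + b t * Rsinh + p t * t ^ 4`,
  -- with `Rcosh`, `Rsinh` the remainders at `ω t` and `a`, `b`, `p` the polynomials below.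
  have ha : Continuous fun t : ℝ ↦ t - 2 * β / ω ^ 2 - ω ^ 2 * t ^ 3 / 3 := by fun_prop
  have hb : Continuous fun t : ℝ ↦ β * t / ω - 1 / ω - β * ω * t ^ 3 / 3 := by fun_prop
  have hp : Continuous fun t : ℝ ↦ -(β * ω ^ 2 / 6) - ω ^ 4 * t / 6 - β * ω ^ 4 * t ^ 2 / 18 := by
    fun_prop
  refine (((hc.tendsto_mul_left (ha.tendsto 0)).add (hs.tendsto_mul_left (hb.tendsto 0))).add
    ((isBigO_refl (· ^ 4) _).tendsto_mul_left (hp.tendsto 0))).congr_left fun t ↦ ?_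
  field_simp
  ring

theorem stmt7_general (σ γ η : ℝ) (hσ : 0 < σ) (hγ : 0 < γ) (hη : η ≠ 0)
    (ω β : ℝ) (hω : ω = σ * γ * η)
    (v D : ℝ → ℝ)
    (hv : ∀ t, v t = Real.cosh (ω * t) + (β / ω) * Real.sinh (ω * t))
    (hD : ∀ t, D t =
      (1 / (2 * γ ^ 2)) *
        ((t * v t - Real.sinh (ω * t) / ω - 2 * β * (Real.cosh (ω * t) - 1) / ω ^ 2) / v t)) :
    (fun t => D t - (σ ^ 2 * η ^ 2 / 6) * t ^ 3) =O[𝓝 (0:ℝ)] fun t => t ^ 4 := by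
  have hω0 : ω ≠ 0 := hω ▸ mul_ne_zero (mul_ne_zero hσ.ne' hγ.ne') hη
  have hv0 : Tendsto v (𝓝 0) (𝓝 1) := by
    rw [funext hv]
    simpa using ((by fun_prop : Continuous fun t ↦
      Real.cosh (ω * t) + β / ω * Real.sinh (ω * t)).tendsto 0)
  have hnum := damping_numerator_sub_isBigO_pow_four hω0 β
  simp only [← hv] at hnum
  refine ((hnum.tendsto_mul_left (hv0.inv₀ one_ne_zero)).const_mul_left (1 / (2 * γ ^ 2))).congr'
    ?_ EventuallyEq.rfl
  filter_upwards [hv0.eventually_ne one_ne_zero] with t ht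
  rw [hD, hω]
  field_simp
  ring

/-- Delayed onset of decoherence at `p₀ = 0`, `δq = 0`:
`D(t) = (σ²η²/6)·t³ + O(t⁴)` as `t → 0`. -/
theorem stmt7 (σ γ g η : ℝ) (hσ : 0 < σ) (hγ : 0 < γ) (hg : 0 < g) (hη : η ≠ 0)
    (ω β : ℝ) (hω : ω = σ * γ * η) (hβ : β = 2 * σ ^ 2 / g)
    (v D : ℝ → ℝ)
    (hv : ∀ t, v t = Real.cosh (ω * t) + (β / ω) * Real.sinh (ω * t))
    (hD : ∀ t, D t =
      (1 / (2 * γ ^ 2)) *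
        ((t * v t - Real.sinh (ω * t) / ω - 2 * β * (Real.cosh (ω * t) - 1) / ω ^ 2) / v t)) :
    (fun t => D t - (σ ^ 2 * η ^ 2 / 6) * t ^ 3) =O[𝓝 (0:ℝ)] fun t => t ^ 4 :=
  stmt7_general σ γ η hσ hγ hη ω β hω v D hv hD
end

section
/- Fix real parameters σ > 0, g > 0, η ≠ 0, t ≥ 0 and Q₀ ∈ ℝ; set β = 2σ²/g. For γ > 0 set ω(γ) = σγη and define D_γ(t) = (1/(2γ²))·(t·v_γ(t) − sinh(ω(γ)t)/ω(γ) − 2β(cosh(ω(γ)t) − 1)/ω(γ)²)/v_γ(t) − σ²ηQ₀·(cosh(ω(γ)t) − 1)/(ω(γ)²·v_γ(t)) + (σ²Q₀²/2)·sinh(ω(γ)t)/(ω(γ)·v_γ(t)) + (γ²η²P₀²/2)·sinh(ω(γ)t)/(ω(γ)·u_γ(t)), where u_γ(t) = cosh(ω(γ)t) + (ω(γ)/β)sinh(ω(γ)t) and v_γ(t) = cosh(ω(γ)t) + (β/ω(γ))sinh(ω(γ)t), and P₀ ∈ ℝ. Then D_γ(t) converges, as γ → 0 through positive values, to (σ²/(1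 + βt))·(t³/6 + σ²t⁴/(12g))·η² − (Q₀σ²/2)·(t²/(1 + βt))·η + (Q₀²σ²/2)·(t/(1 + βt)). -/
/-!
With `ω = σγη`, the damping exponent depends on `γ` only through `ω`: the `γ⁻²`-term equals
`(σ²η²/2)(A + βB)/v`, since `t v − sinh(ωt)/ω − 2β(cosh(ωt) − 1)/ω² = ω²(A + βB)` with
`A = (ωt cosh ωt − sinh ωt)/ω³` and `B = (ωt sinh ωt − 2(cosh ωt − 1))/ω⁴`, and the `P₀`-term is
`(P₀²/(2σ²)) ω sinh(ωt)/u`. L'Hôpital gives `sinh(ωt)/ω → t`, `(cosh(ωt) − 1)/ω² → t²/2`,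
`A → t³/3`, `B → t⁴/12` as `ω → 0`, while `v → 1 + βt` and `u → 1`, so the `P₀`-term vanishes.
-/

open Topology Filter Real

theorem tendsto_div_pow_succ_of_hasDerivAt {f f' : ℝ → ℝ} {n : ℕ} {L : ℝ}
    (hf : ∀ x, HasDerivAt f (f' x) x) (hf₀ : f 0 = 0)
    (hf' : Tendsto (fun x => f' x / x ^ n) (𝓝[≠] 0) (𝓝 ((n + 1) * L))) :
    Tendsto (fun x => f x / x ^ (n + 1)) (𝓝[≠] 0) (𝓝 L) := by
  refine HasDerivAt.lhopital_zero_nhdsNE (f' := f') (g' := fun x => (n + 1) * x ^ n)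
    (.of_forall hf) (.of_forall fun x => by simpa using hasDerivAt_pow (n + 1) x) ?_ ?_ ?_ ?_
  · filter_upwards [self_mem_nhdsWithin] with x hx
    exact mul_ne_zero (by positivity) (pow_ne_zero _ hx)
  · simpa [hf₀] using ((hf 0).continuousAt.tendsto).mono_left nhdsWithin_le_nhds
  · simpa using ((continuous_pow (n + 1)).tendsto (0 : ℝ)).mono_left nhdsWithin_le_nhds
  · have hn : (n + 1 : ℝ) ≠ 0 := by positivity
    simpa [div_mul_eq_div_div_swap, hn] using hf'.div_const (n + 1 : ℝ)

section

variable (t : ℝ)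

theorem tendsto_sinh_mul_div : Tendsto (fun ω => sinh (ω * t) / ω) (𝓝[≠] 0) (𝓝 t) := by
  have hcosh : Tendsto (fun ω => cosh (ω * t) * t) (𝓝[≠] 0) (𝓝 t) :=
    ((by fun_prop : Continuous fun ω => cosh (ω * t) * t).tendsto' 0 t (by simp)).mono_left
      nhdsWithin_le_nhds
  simpa using tendsto_div_pow_succ_of_hasDerivAt (n := 0) (L := t)
    (fun ω => (hasDerivAt_mul_const t).sinh (x := ω)) (by simp) (by simpa using hcosh)

theorem tendsto_cosh_mul_sub_one_div_sq :
    Tendsto (fun ω => (cosh (ω * t) - 1) / ω ^ 2) (𝓝[≠] 0) (𝓝 (t ^ 2 / 2)) := by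
  refine tendsto_div_pow_succ_of_hasDerivAt (n := 1)
    (fun ω => ((hasDerivAt_mul_const t).cosh (x := ω)).sub_const 1) (by simp) ?_
  convert (tendsto_sinh_mul_div t).const_mul t using 2
  · ring
  · push_cast; ring

theorem tendsto_mul_cosh_sub_sinh_div_pow_three :
    Tendsto (fun ω => (ω * t * cosh (ω * t) - sinh (ω * t)) / ω ^ 3) (𝓝[≠] 0)
      (𝓝 (t ^ 3 / 3)) := by
  refine tendsto_div_pow_succ_of_hasDerivAt (n := 2) (f' := fun ω => t ^ 2 * ω * sinh (ω * t))
    (fun ω => ?_) (by simp) ?_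
  · exact (((hasDerivAt_mul_const t).mul ((hasDerivAt_mul_const t).cosh (x := ω))).sub
      ((hasDerivAt_mul_const t).sinh (x := ω))).congr_deriv (by ring)
  · convert ((tendsto_sinh_mul_div t).const_mul (t ^ 2)).congr' ?_ using 2
    · push_cast; ring
    filter_upwards [self_mem_nhdsWithin] with ω hω
    field_simp

theorem tendsto_mul_sinh_sub_two_mul_cosh_sub_one_div_pow_four :
    Tendsto (fun ω => (ω * t * sinh (ω * t) - 2 * (cosh (ω * t) - 1)) / ω ^ 4) (𝓝[≠] 0)
      (𝓝 (t ^ 4 / 12)) := by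
  refine tendsto_div_pow_succ_of_hasDerivAt (n := 3)
    (f' := fun ω => t * (ω * t * cosh (ω * t) - sinh (ω * t))) (fun ω => ?_) (by simp) ?_
  · exact (((hasDerivAt_mul_const t).mul ((hasDerivAt_mul_const t).sinh (x := ω))).sub
      (((hasDerivAt_mul_const t).cosh (x := ω)).sub_const 1 |>.const_mul 2)).congr_deriv
        (by ring)
  · convert (tendsto_mul_cosh_sub_sinh_div_pow_three t).const_mul t using 2
    · ring
    · push_cast; ring

theorem tendsto_cosh_mul_add_div_mul_sinh_mul (β : ℝ) :
    Tendsto (fun ω => cosh (ω * t) + β / ω * sinh (ω * t)) (𝓝[≠] 0) (𝓝 (1 + β * t)) := by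
  have hcosh : Tendsto (fun ω => cosh (ω * t)) (𝓝[≠] 0) (𝓝 1) :=
    ((by fun_prop : Continuous fun ω => cosh (ω * t)).tendsto' 0 1 (by simp)).mono_left
      nhdsWithin_le_nhds
  convert hcosh.add ((tendsto_sinh_mul_div t).const_mul β) using 2
  ring

theorem tendsto_cosh_mul_add_mul_sinh_mul (β : ℝ) :
    Tendsto (fun ω => cosh (ω * t) + ω / β * sinh (ω * t)) (𝓝[≠] 0) (𝓝 1) :=
  ((by fun_prop : Continuous fun ω => cosh (ω * t) + ω / β * sinh (ω * t)).tendsto' 0 1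
    (by simp)).mono_left nhdsWithin_le_nhds

theorem tendsto_damping_exponent (β a b c d : ℝ) (hβt : 1 + β * t ≠ 0) :
    Tendsto (fun ω =>
        (a * ((ω * t * cosh (ω * t) - sinh (ω * t)) / ω ^ 3
            + β * ((ω * t * sinh (ω * t) - 2 * (cosh (ω * t) - 1)) / ω ^ 4))
          - b * ((cosh (ω * t) - 1) / ω ^ 2) + c * (sinh (ω * t) / ω))
          / (cosh (ω * t) + β / ω * sinh (ω * t))
        + d * ω * sinh (ω * t) / (cosh (ω * t) + ω / β * sinh (ω * t)))
      (𝓝[≠] 0)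
      (𝓝 ((a * (t ^ 3 / 3 + β * (t ^ 4 / 12)) - b * (t ^ 2 / 2) + c * t) / (1 + β * t))) := by
  have hnum := (((tendsto_mul_cosh_sub_sinh_div_pow_three t).add
    ((tendsto_mul_sinh_sub_two_mul_cosh_sub_one_div_pow_four t).const_mul β)).const_mul a).sub
    ((tendsto_cosh_mul_sub_one_div_sq t).const_mul b) |>.add ((tendsto_sinh_mul_div t).const_mul c)
  have hdephasing : Tendsto (fun ω => d * ω * sinh (ω * t)) (𝓝[≠] 0) (𝓝 0) :=
    ((by fun_prop : Continuous fun ω => d * ω * sinh (ω * t)).tendsto' 0 0 (by simp)).mono_left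
      nhdsWithin_le_nhds
  simpa using (hnum.div (tendsto_cosh_mul_add_div_mul_sinh_mul t β) hβt).add
    (hdephasing.div (tendsto_cosh_mul_add_mul_sinh_mul t β) one_ne_zero)

end

/-- The damping exponent `D_γ(t)` of the non-Gaussian channel converges,
as the dephasing parameter `γ → 0⁺`, to the damping exponent of the Gaussian channel:
`lim_{γ→0⁺} D_γ(t) = (σ²/(1+βt))(t³/6 + σ²t⁴/(12g))η² − (Q₀σ²/2)(t²/(1+βt))η
  + (Q₀²σ²/2)(t/(1+βt))`. -/
theorem stmt8 (σ g η t Q₀ P₀ : ℝ) (hσ : 0 < σ) (hg : 0 < g) (hη : η ≠ 0) (ht : 0 ≤ t)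
    (β : ℝ) (hβ : β = 2 * σ ^ 2 / g)
    (ωf uf vf Df : ℝ → ℝ)
    (hωf : ∀ γ, ωf γ = σ * γ * η)
    (huf : ∀ γ > 0, uf γ = Real.cosh (ωf γ * t) + (ωf γ / β) * Real.sinh (ωf γ * t))
    (hvf : ∀ γ > 0, vf γ = Real.cosh (ωf γ * t) + (β / ωf γ) * Real.sinh (ωf γ * t))
    (hDf : ∀ γ > 0, Df γ =
      (1 / (2 * γ ^ 2)) *
          ((t * vf γ - Real.sinh (ωf γ * t) / ωf γ
              - 2 * β * (Real.cosh (ωf γ * t) - 1) / (ωf γ) ^ 2) / vf γ)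
        - σ ^ 2 * η * Q₀ * (Real.cosh (ωf γ * t) - 1) / ((ωf γ) ^ 2 * vf γ)
        + (σ ^ 2 * Q₀ ^ 2 / 2) * Real.sinh (ωf γ * t) / (ωf γ * vf γ)
        + (γ ^ 2 * η ^ 2 * P₀ ^ 2 / 2) * Real.sinh (ωf γ * t) / (ωf γ * uf γ)) :
    Tendsto Df (𝓝[>] (0:ℝ))
      (𝓝 (σ ^ 2 / (1 + β * t) * (t ^ 3 / 6 + σ ^ 2 * t ^ 4 / (12 * g)) * η ^ 2
        - Q₀ * σ ^ 2 / 2 * (t ^ 2 / (1 + β * t)) * η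
        + Q₀ ^ 2 * σ ^ 2 / 2 * (t / (1 + β * t)))) := by
  have hβt : 1 + β * t ≠ 0 := by rw [hβ]; positivity
  have hω : Tendsto (fun γ => σ * γ * η) (𝓝[>] 0) (𝓝[≠] 0) := by
    refine tendsto_nhdsWithin_iff.mpr ⟨?_, ?_⟩
    · exact ((by fun_prop : Continuous fun γ => σ * γ * η).tendsto' 0 0 (by simp)).mono_left
        nhdsWithin_le_nhds
    · filter_upwards [self_mem_nhdsWithin] with γ hγ
      exact mul_ne_zero (mul_ne_zero hσ.ne' hγ.ne') hη
  have hlim := (tendsto_damping_exponent t β (σ ^ 2 * η ^ 2 / 2) (σ ^ 2 * η * Q₀)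
    (σ ^ 2 * Q₀ ^ 2 / 2) (P₀ ^ 2 / (2 * σ ^ 2)) hβt).comp hω
  have hv := hω.eventually ((tendsto_cosh_mul_add_div_mul_sinh_mul t β).eventually_ne hβt)
  have hu := hω.eventually ((tendsto_cosh_mul_add_mul_sinh_mul t β).eventually_ne one_ne_zero)
  convert hlim.congr' ?_ using 2
  · rw [hβ]
    ring
  · filter_upwards [self_mem_nhdsWithin, hv, hu] with γ (hγ : 0 < γ) hvγ huγ
    rw [Function.comp_apply, hDf γ hγ, hvf γ hγ, huf γ hγ, hωf γ]
    have : σ * γ * η ≠ 0 := mul_ne_zero (mul_ne_zero hσ.ne' hγ.ne') hη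
    field_simp
    ring
end

section
/- Fix ℏ > 0, σ > 0, γ > 0, g > 0 and p₀, q₀ ∈ ℝ; set β = 2σ²/g. For t, ω ∈ ℝ let sh(t,ω) = sinh(ωt)/ω for ω ≠ 0 with sh(t,0) = t, and ch(t,ω) = (cosh(ωt) − 1)/ω² for ω ≠ 0 with ch(t,0) = t²/2. Writing ω = σγη, define u(t,η) = cosh(ωt) + (ω²/β)·sh(t,ω), v(t,η) = cosh(ωt) + β·sh(t,ω), a(t,η) = g·v/u, P(t,η) = p₀/u, Q(t,η) = −η·(β·ch(t,ω) + sh(t,ω))/v, φ(t,η) = β·p₀·η·ch(t,ω)/v, D(t,η) = (1/(2γ²))·(t·v − sh(t,ω) − 2β·ch(t,ω))/v + (γ²η²p₀²/2)·sh(t,ω)/u, and χ(t,ξ,η) = u(t,η)^{−1/2}·exp(−D(t,η)/ℏ)·exp((i/ℏ)(φ(t,η) + q₀·η + P(t,η)·(ξ − Q(t,η))))·exp(−η²/(4ℏg) − a(t,η)·(ξ − Q(t,η))²/(4ℏ)). Then for every t ≥ 0: the function ξ ↦ χ(t,ξ,0) has complex derivative (i/ℏ)·p₀ at ξ = 0,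 and the function η ↦ χ(t,0,η) has complex derivative (i/ℏ)·(q₀ + t·p₀) at η = 0. Equivalently, the momentum and position expectation values of the evolved state are ⟨p̂⟩ₜ = p₀ and ⟨q̂⟩ₜ = q₀ + t·p₀. -/
/-!
At `η = 0` the coefficients degenerate (`u = 1`, `Q = φ = D = 0`, `P = p₀`), so `χ(t, ·, 0)` is a
centred Gaussian times the plane wave `exp (i p₀ ξ / ℏ)`, whose slope at `ξ = 0` is `i p₀ / ℏ`.
In `η`, the functions `sh(t, ω)` and `ch(t, ω)` differ from their values at `ω = 0` by `O(ω²)`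
(third- and fourth-order Taylor bounds for `exp`), so `u`, `v`, `P`, `a`, `D` are stationary at
`η = 0` and `Q`, `φ` have slopes `-(β t²/2 + t)/(1 + β t)` and `β p₀ t²/(2(1 + β t))`. Hence only
the phase `φ + q₀ η - P Q` moves to first order, with slope
`q₀ + p₀ (β t² + t)/(1 + β t) = q₀ + t p₀`.
-/

open Real Filter Topology Asymptotics

theorem Real.abs_sinh_sub_self_le {x : ℝ} (hx : |x| ≤ 1) : |sinh x - x| ≤ |x| ^ 3 := by
  have hp := Real.exp_bound hx (n := 3) (by norm_num)
  have hm := Real.exp_bound (x := -x) (by rwa [abs_neg]) (n := 3) (by norm_num)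
  simp only [Finset.sum_range_succ, Finset.sum_range_zero, abs_neg] at hp hm
  norm_num [Nat.factorial] at hp hm
  have hsplit : sinh x - x =
      ((exp x - (1 + x + x ^ 2 / 2)) - (exp (-x) - (1 + -x + x ^ 2 / 2))) / 2 := by
    rw [sinh_eq]; ring
  rw [hsplit, abs_div, abs_two]
  have := abs_sub (exp x - (1 + x + x ^ 2 / 2)) (exp (-x) - (1 + -x + x ^ 2 / 2))
  nlinarith [pow_nonneg (abs_nonneg x) 3]

theorem Real.abs_cosh_sub_one_sub_sq_div_two_le {x : ℝ} (hx : |x| ≤ 1) :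
    |cosh x - 1 - x ^ 2 / 2| ≤ x ^ 4 := by
  have hp := Real.exp_bound hx (n := 4) (by norm_num)
  have hm := Real.exp_bound (x := -x) (by rwa [abs_neg]) (n := 4) (by norm_num)
  simp only [Finset.sum_range_succ, Finset.sum_range_zero, abs_neg] at hp hm
  norm_num [Nat.factorial] at hp hm
  have hsplit : cosh x - 1 - x ^ 2 / 2 = ((exp x - (1 + x + x ^ 2 / 2 + x ^ 3 / 6))
      + (exp (-x) - (1 + -x + x ^ 2 / 2 + (-x) ^ 3 / 6))) / 2 := by
    rw [cosh_eq]; ring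
  rw [hsplit, abs_div, abs_two, ← (show Even 4 by decide).pow_abs x]
  have := abs_add_le (exp x - (1 + x + x ^ 2 / 2 + x ^ 3 / 6))
    (exp (-x) - (1 + -x + x ^ 2 / 2 + (-x) ^ 3 / 6))
  nlinarith [pow_nonneg (abs_nonneg x) 4]

theorem hasDerivAt_of_isBigO_sq {f : ℝ → ℝ} {a : ℝ}
    (h : (fun x => f x - f a) =O[𝓝 a] fun x => (x - a) ^ 2) : HasDerivAt f 0 a := by
  rw [hasDerivAt_iff_isLittleO]
  simp only [smul_zero, sub_zero]
  exact h.trans_isLittleO <| (isLittleO_pow_id one_lt_two).comp_tendsto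
    (tendsto_sub_nhds_zero_iff.2 (tendsto_id (x := 𝓝 a)))

theorem HasDerivAt.comp_const_mul_of_zero {f : ℝ → ℝ} (hf : HasDerivAt f 0 0) (k : ℝ) :
    HasDerivAt (fun x => f (k * x)) 0 0 := by
  simpa [Function.comp_def] using hf.comp_of_eq (0 : ℝ) ((hasDerivAt_id 0).const_mul k) (by simp)

theorem HasDerivAt.mul_sq_of_eq_zero {a q : ℝ → ℝ} {a' q' x : ℝ} (ha : HasDerivAt a a' x)
    (hq : HasDerivAt q q' x) (hq0 : q x = 0) : HasDerivAt (fun y => a y * q y ^ 2) 0 x := by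
  simpa [hq0] using ha.fun_mul (hq.fun_pow 2)

theorem hasDerivAt_cosh_mul_mul (k t : ℝ) : HasDerivAt (fun x => cosh (k * x * t)) 0 0 := by
  simpa using (((hasDerivAt_id 0).const_mul k).mul_const t).cosh

theorem hasDerivAt_inv_sqrt_mul_cexp_mul_cexp_mul_cexp {U B W R : ℝ → ℝ} {W' x : ℝ} (c z : ℂ)
    (hU : HasDerivAt U 0 x) (hB : HasDerivAt B 0 x) (hW : HasDerivAt W W' x)
    (hR : HasDerivAt R 0 x) (hU1 : U x = 1) (hB0 : B x = 0) (hW0 : W x = 0) (hR0 : R x = 0) :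
    HasDerivAt (fun y => ((√(U y))⁻¹ : ℝ) * Complex.exp (-(B y : ℂ) / c) *
      Complex.exp (z * (W y : ℂ)) * Complex.exp (R y : ℂ)) (z * W') x := by
  have hA : HasDerivAt (fun y => (√(U y))⁻¹) 0 x := by
    simpa [hU1] using ((hasDerivAt_sqrt (by simp [hU1])).comp x hU).fun_inv (by simp [hU1])
  refine (((hA.ofReal_comp.fun_mul (hB.ofReal_comp.fun_neg.div_const c).cexp).fun_mul
    (hW.ofReal_comp.const_mul z).cexp).fun_mul hR.ofReal_comp.cexp).congr_deriv ?_
  simp [hU1, hB0, hW0, hR0]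

noncomputable def sinhDiv (t ω : ℝ) : ℝ := if ω = 0 then t else sinh (ω * t) / ω

noncomputable def coshSubOneDiv (t ω : ℝ) : ℝ :=
  if ω = 0 then t ^ 2 / 2 else (cosh (ω * t) - 1) / ω ^ 2

@[simp] theorem sinhDiv_zero (t : ℝ) : sinhDiv t 0 = t := if_pos rfl

@[simp] theorem coshSubOneDiv_zero (t : ℝ) : coshSubOneDiv t 0 = t ^ 2 / 2 := if_pos rfl

theorem abs_sinhDiv_sub_le {t ω : ℝ} (h : |ω * t| ≤ 1) :
    |sinhDiv t ω - t| ≤ |t| ^ 3 * ω ^ 2 := by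
  rcases eq_or_ne ω 0 with rfl | hω
  · simp
  have : sinhDiv t ω - t = (sinh (ω * t) - ω * t) / ω := by
    rw [sinhDiv, if_neg hω]; field_simp
  rw [this, abs_div, div_le_iff₀ (abs_pos.2 hω)]
  calc |sinh (ω * t) - ω * t| ≤ |ω * t| ^ 3 := abs_sinh_sub_self_le h
    _ = |t| ^ 3 * ω ^ 2 * |ω| := by rw [abs_mul, ← sq_abs ω]; ring

theorem abs_coshSubOneDiv_sub_le {t ω : ℝ} (h : |ω * t| ≤ 1) :
    |coshSubOneDiv t ω - t ^ 2 / 2| ≤ t ^ 4 * ω ^ 2 := by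
  rcases eq_or_ne ω 0 with rfl | hω
  · simp
  have : coshSubOneDiv t ω - t ^ 2 / 2 = (cosh (ω * t) - 1 - (ω * t) ^ 2 / 2) / ω ^ 2 := by
    rw [coshSubOneDiv, if_neg hω]; field_simp
  rw [this, abs_div, abs_of_pos (by positivity : (0 : ℝ) < ω ^ 2), div_le_iff₀ (by positivity)]
  calc |cosh (ω * t) - 1 - (ω * t) ^ 2 / 2| ≤ (ω * t) ^ 4 :=
        abs_cosh_sub_one_sub_sq_div_two_le h
    _ = t ^ 4 * ω ^ 2 * ω ^ 2 := by ring

theorem eventually_abs_mul_le_one (t : ℝ) : ∀ᶠ ω in 𝓝 (0 : ℝ), |ω * t| ≤ 1 :=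
  ((continuous_id.mul continuous_const).abs.tendsto' 0 0 (by simp)).eventually_le_const one_pos

theorem hasDerivAt_sinhDiv (t : ℝ) : HasDerivAt (sinhDiv t) 0 0 := by
  refine hasDerivAt_of_isBigO_sq (IsBigO.of_bound (|t| ^ 3) ?_)
  filter_upwards [eventually_abs_mul_le_one t] with ω h
  simpa using abs_sinhDiv_sub_le h

theorem hasDerivAt_coshSubOneDiv (t : ℝ) : HasDerivAt (coshSubOneDiv t) 0 0 := by
  refine hasDerivAt_of_isBigO_sq (IsBigO.of_bound (t ^ 4) ?_)
  filter_upwards [eventually_abs_mul_le_one t] with ω h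
  simpa using abs_coshSubOneDiv_sub_le h

noncomputable section

-- `k` stands for `σ γ`, so the frequency `ω = σ γ η` of the paper is `k * η`.

namespace EvolvedGaussian

variable (β γ k g p₀ t : ℝ)

def u (η : ℝ) : ℝ := cosh (k * η * t) + (k * η) ^ 2 / β * sinhDiv t (k * η)

def v (η : ℝ) : ℝ := cosh (k * η * t) + β * sinhDiv t (k * η)

def a (η : ℝ) : ℝ := g * v β k t η / u β k t η

def P (η : ℝ) : ℝ := p₀ / u β k t η

def Q (η : ℝ) : ℝ := -η * (β * coshSubOneDiv t (k * η) + sinhDiv t (k * η)) / v β k t η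

def φ (η : ℝ) : ℝ := β * p₀ * η * coshSubOneDiv t (k * η) / v β k t η

def D (η : ℝ) : ℝ :=
  (1 / (2 * γ ^ 2)) * ((t * v β k t η - sinhDiv t (k * η) - 2 * β * coshSubOneDiv t (k * η)) /
    v β k t η) + (γ ^ 2 * η ^ 2 * p₀ ^ 2 / 2) * (sinhDiv t (k * η) / u β k t η)

@[simp] theorem u_zero : u β k t 0 = 1 := by simp [u]

@[simp] theorem v_zero : v β k t 0 = 1 + β * t := by simp [v]

@[simp] theorem P_zero : P β k p₀ t 0 = p₀ := by simp [P]

@[simp] theorem Q_zero : Q β k t 0 = 0 := by simp [Q]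

@[simp] theorem φ_zero : φ β k p₀ t 0 = 0 := by simp [φ]

@[simp] theorem D_zero : D β γ k p₀ t 0 = 0 := by
  simp [D, show t * (1 + β * t) - t - 2 * β * (t ^ 2 / 2) = 0 by ring]

theorem hasDerivAt_u : HasDerivAt (u β k t) 0 0 :=
  ((hasDerivAt_cosh_mul_mul k t).fun_add (((((hasDerivAt_id 0).const_mul k).fun_pow 2).div_const
    β).fun_mul ((hasDerivAt_sinhDiv t).comp_const_mul_of_zero k))).congr_deriv (by simp)

theorem hasDerivAt_v : HasDerivAt (v β k t) 0 0 :=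
  ((hasDerivAt_cosh_mul_mul k t).fun_add
    (((hasDerivAt_sinhDiv t).comp_const_mul_of_zero k).const_mul β)).congr_deriv (by simp)

theorem hasDerivAt_a : HasDerivAt (a β k g t) 0 0 :=
  (((hasDerivAt_v β k t).const_mul g).fun_div (hasDerivAt_u β k t) (by simp)).congr_deriv
    (by simp)

theorem hasDerivAt_P : HasDerivAt (P β k p₀ t) 0 0 :=
  ((hasDerivAt_const 0 p₀).fun_div (hasDerivAt_u β k t) (by simp)).congr_deriv (by simp)

variable {β γ k p₀ t}

theorem hasDerivAt_Q (h : 1 + β * t ≠ 0) :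
    HasDerivAt (Q β k t) (-(β * (t ^ 2 / 2) + t) / (1 + β * t)) 0 := by
  refine (((hasDerivAt_id 0).fun_neg.fun_mul
    ((((hasDerivAt_coshSubOneDiv t).comp_const_mul_of_zero k).const_mul β).fun_add
      ((hasDerivAt_sinhDiv t).comp_const_mul_of_zero k))).fun_div
    (hasDerivAt_v β k t) (by simpa using h)).congr_deriv ?_
  simp only [mul_zero, coshSubOneDiv_zero, sinhDiv_zero, neg_mul, one_mul, neg_add_rev, neg_zero,
    add_zero, v_zero, zero_mul, sub_zero]
  field_simp

theorem hasDerivAt_φ (h : 1 + β * t ≠ 0) :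
    HasDerivAt (φ β k p₀ t) (β * p₀ * (t ^ 2 / 2) / (1 + β * t)) 0 := by
  refine ((((hasDerivAt_id 0).const_mul (β * p₀)).fun_mul
    ((hasDerivAt_coshSubOneDiv t).comp_const_mul_of_zero k)).fun_div
    (hasDerivAt_v β k t) (by simpa using h)).congr_deriv ?_
  simp only [mul_one, mul_zero, coshSubOneDiv_zero, id_eq, add_zero, v_zero, zero_mul, sub_zero]
  field_simp

theorem hasDerivAt_D (h : 1 + β * t ≠ 0) : HasDerivAt (D β γ k p₀ t) 0 0 := by
  have hS := (hasDerivAt_sinhDiv t).comp_const_mul_of_zero k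
  have hC := (hasDerivAt_coshSubOneDiv t).comp_const_mul_of_zero k
  have hV := hasDerivAt_v β k t
  refine ((((((hV.const_mul t).fun_sub hS).fun_sub (hC.const_mul (2 * β))).fun_div hV
    (by simpa using h)).const_mul _).fun_add
    (((((hasDerivAt_id 0).fun_pow 2).const_mul (γ ^ 2)).mul_const (p₀ ^ 2) |>.div_const 2).fun_mul
      (hS.fun_div (hasDerivAt_u β k t) (by simp)))).congr_deriv ?_
  simp

theorem hasDerivAt_phase (h : 1 + β * t ≠ 0) (q₀ : ℝ) :
    HasDerivAt (fun η => φ β k p₀ t η + q₀ * η + P β k p₀ t η * (0 - Q β k t η))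
      (q₀ + t * p₀) 0 := by
  refine (((hasDerivAt_φ h).fun_add ((hasDerivAt_id 0).const_mul q₀)).fun_add
    ((hasDerivAt_P β k p₀ t).fun_mul ((hasDerivAt_const _ 0).fun_sub (hasDerivAt_Q h)))).congr_deriv
    ?_
  simp only [mul_one, Q_zero, sub_self, mul_zero, P_zero, neg_add_rev, zero_sub, mul_neg, zero_add]
  field_simp
  ring

end EvolvedGaussian

end

theorem stmt11_general (hbar σ γ g p₀ q₀ : ℝ)
    (hg : 0 < g)
    (β : ℝ) (hβ : β = 2 * σ ^ 2 / g)
    (sh ch : ℝ → ℝ → ℝ)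
    (hsh : ∀ t ω, sh t ω = if ω = 0 then t else Real.sinh (ω * t) / ω)
    (hch : ∀ t ω, ch t ω = if ω = 0 then t ^ 2 / 2 else (Real.cosh (ω * t) - 1) / ω ^ 2)
    (u v a P Q φ D : ℝ → ℝ → ℝ) (χ : ℝ → ℝ → ℝ → ℂ)
    (hu : ∀ t η, u t η = Real.cosh (σ * γ * η * t) + ((σ * γ * η) ^ 2 / β) * sh t (σ * γ * η))
    (hv : ∀ t η, v t η = Real.cosh (σ * γ * η * t) + β * sh t (σ * γ * η))
    (ha : ∀ t η, a t η = g * v t η / u t η)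
    (hP : ∀ t η, P t η = p₀ / u t η)
    (hQ : ∀ t η, Q t η = -η * (β * ch t (σ * γ * η) + sh t (σ * γ * η)) / v t η)
    (hφ : ∀ t η, φ t η = β * p₀ * η * ch t (σ * γ * η) / v t η)
    (hD : ∀ t η, D t η =
      (1 / (2 * γ ^ 2)) *
          ((t * v t η - sh t (σ * γ * η) - 2 * β * ch t (σ * γ * η)) / v t η)
        + (γ ^ 2 * η ^ 2 * p₀ ^ 2 / 2) * (sh t (σ * γ * η) / u t η))
    (hχ : ∀ t ξ η, χ t ξ η =
      ((Real.sqrt (u t η))⁻¹ : ℝ) * Complex.exp (-(D t η : ℂ) / (hbar : ℂ)) *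
        Complex.exp ((Complex.I / (hbar : ℂ)) *
          ((φ t η + q₀ * η + P t η * (ξ - Q t η) : ℝ) : ℂ)) *
        Complex.exp (((-(η ^ 2 / (4 * hbar * g)) - a t η * (ξ - Q t η) ^ 2 / (4 * hbar) : ℝ) : ℂ))) :
    ∀ t ≥ 0,
      HasDerivAt (fun ξ => χ t ξ 0) (Complex.I / (hbar : ℂ) * (p₀ : ℂ)) 0 ∧
      HasDerivAt (fun η => χ t 0 η) (Complex.I / (hbar : ℂ) * ((q₀ + t * p₀ : ℝ) : ℂ)) 0 := by
  obtain rfl : sh = sinhDiv := funext fun t => funext (hsh t)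
  obtain rfl : ch = coshSubOneDiv := funext fun t => funext (hch t)
  obtain rfl : u = EvolvedGaussian.u β (σ * γ) := funext fun t => funext (hu t)
  obtain rfl : v = EvolvedGaussian.v β (σ * γ) := funext fun t => funext (hv t)
  obtain rfl : a = EvolvedGaussian.a β (σ * γ) g := funext fun t => funext (ha t)
  obtain rfl : P = EvolvedGaussian.P β (σ * γ) p₀ := funext fun t => funext (hP t)
  obtain rfl : Q = EvolvedGaussian.Q β (σ * γ) := funext fun t => funext (hQ t)
  obtain rfl : φ = EvolvedGaussian.φ β (σ * γ) p₀ := funext fun t => funext (hφ t)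
  obtain rfl : D = EvolvedGaussian.D β γ (σ * γ) p₀ := funext fun t => funext (hD t)
  intro t ht
  have hβt : 1 + β * t ≠ 0 := by
    have : 0 ≤ β := hβ ▸ by positivity
    positivity
  simp only [hχ]
  constructor
  · refine hasDerivAt_inv_sqrt_mul_cexp_mul_cexp_mul_cexp _ _ (hasDerivAt_const _ _)
      (hasDerivAt_const _ _) ?_ ?_ (by simp) (by simp) (by simp) (by simp)
    · simpa using (hasDerivAt_id (0 : ℝ)).const_mul p₀
    · simpa using (((hasDerivAt_const 0 (EvolvedGaussian.a β (σ * γ) g t 0)).mul_sq_of_eq_zero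
        (hasDerivAt_id (0 : ℝ)) rfl).div_const (4 * hbar)).fun_neg
  · refine hasDerivAt_inv_sqrt_mul_cexp_mul_cexp_mul_cexp _ _ (EvolvedGaussian.hasDerivAt_u _ _ _)
      (EvolvedGaussian.hasDerivAt_D hβt) (EvolvedGaussian.hasDerivAt_phase hβt q₀) ?_
      (by simp) (by simp) (by simp) (by simp)
    simpa using (((hasDerivAt_id 0).fun_pow 2).div_const (4 * hbar * g)).fun_neg.fun_sub
      (((EvolvedGaussian.hasDerivAt_a _ _ _ _).mul_sq_of_eq_zero
        ((hasDerivAt_const _ 0).fun_sub (EvolvedGaussian.hasDerivAt_Q hβt)) (by simp)).div_const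
        (4 * hbar))

/-- First moments of the evolved state: the characteristic function
`χ(t,ξ,η)` of the evolved Gaussian state satisfies
`∂_ξ χ(t,0,0) = (i/ℏ)p₀` and `∂_η χ(t,0,0) = (i/ℏ)(q₀ + tp₀)`,
i.e. `⟨p̂⟩ₜ = p₀` and `⟨q̂⟩ₜ = q₀ + t·p₀`. -/
theorem stmt11 (hbar σ γ g p₀ q₀ : ℝ)
    (hhbar : 0 < hbar) (hσ : 0 < σ) (hγ : 0 < γ) (hg : 0 < g)
    (β : ℝ) (hβ : β = 2 * σ ^ 2 / g)
    (sh ch : ℝ → ℝ → ℝ)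
    (hsh : ∀ t ω, sh t ω = if ω = 0 then t else Real.sinh (ω * t) / ω)
    (hch : ∀ t ω, ch t ω = if ω = 0 then t ^ 2 / 2 else (Real.cosh (ω * t) - 1) / ω ^ 2)
    (u v a P Q φ D : ℝ → ℝ → ℝ) (χ : ℝ → ℝ → ℝ → ℂ)
    (hu : ∀ t η, u t η = Real.cosh (σ * γ * η * t) + ((σ * γ * η) ^ 2 / β) * sh t (σ * γ * η))
    (hv : ∀ t η, v t η = Real.cosh (σ * γ * η * t) + β * sh t (σ * γ * η))
    (ha : ∀ t η, a t η = g * v t η / u t η)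
    (hP : ∀ t η, P t η = p₀ / u t η)
    (hQ : ∀ t η, Q t η = -η * (β * ch t (σ * γ * η) + sh t (σ * γ * η)) / v t η)
    (hφ : ∀ t η, φ t η = β * p₀ * η * ch t (σ * γ * η) / v t η)
    (hD : ∀ t η, D t η =
      (1 / (2 * γ ^ 2)) *
          ((t * v t η - sh t (σ * γ * η) - 2 * β * ch t (σ * γ * η)) / v t η)
        + (γ ^ 2 * η ^ 2 * p₀ ^ 2 / 2) * (sh t (σ * γ * η) / u t η))
    (hχ : ∀ t ξ η, χ t ξ η =
      ((Real.sqrt (u t η))⁻¹ : ℝ) * Complex.exp (-(D t η : ℂ) / (hbar : ℂ)) *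
        Complex.exp ((Complex.I / (hbar : ℂ)) *
          ((φ t η + q₀ * η + P t η * (ξ - Q t η) : ℝ) : ℂ)) *
        Complex.exp (((-(η ^ 2 / (4 * hbar * g)) - a t η * (ξ - Q t η) ^ 2 / (4 * hbar) : ℝ) : ℂ))) :
    ∀ t ≥ 0,
      HasDerivAt (fun ξ => χ t ξ 0) (Complex.I / (hbar : ℂ) * (p₀ : ℂ)) 0 ∧
      HasDerivAt (fun η => χ t 0 η) (Complex.I / (hbar : ℂ) * ((q₀ + t * p₀ : ℝ) : ℂ)) 0 :=
  stmt11_general hbar σ γ g p₀ q₀ hg β hβ sh ch hsh hch u v a P Q φ D χ hu hv ha hP hQ hφ hD hχ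
end

section
/- Fix ℏ > 0, σ > 0, γ > 0, g > 0 and p₀, q₀ ∈ ℝ; set β = 2σ²/g. For t, ω ∈ ℝ let sh(t,ω) = sinh(ωt)/ω for ω ≠ 0 with sh(t,0) = t, and ch(t,ω) = (cosh(ωt) − 1)/ω² for ω ≠ 0 with ch(t,0) = t²/2. Writing ω = σγη, define u(t,η) = cosh(ωt) + (ω²/β)·sh(t,ω), v(t,η) = cosh(ωt) + β·sh(t,ω), a(t,η) = g·v/u, P(t,η) = p₀/u, Q(t,η) = −η·(β·ch(t,ω) + sh(t,ω))/v, φ(t,η) = β·p₀·η·ch(t,ω)/v, D(t,η) = (1/(2γ²))·(t·v − sh(t,ω) − 2β·ch(t,ω))/v + (γ²η²p₀²/2)·sh(t,ω)/u, and χ(t,ξ,η) = u(t,η)^{−1/2}·exp(−D(t,η)/ℏ)·exp((i/ℏ)(φ(t,η) + q₀·η + P(t,η)·(ξ − Q(t,η))))·exp(−η²/(4ℏg) − a(t,η)·(ξ − Q(t,η))²/(4ℏ)). Then for every t ≥ 0: (i) the second derivative of ξ ↦ χ(t,ξ,0) at ξ = 0 equals −(1/ℏ²)·(p₀² + ℏ(g/2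 + σ²t)); (ii) the mixed second partial derivative ∂_η∂_ξχ(t,ξ,η) at (ξ,η) = (0,0) equals −(1/ℏ²)·(p₀(q₀ + tp₀) + ℏ(g·t/2 + σ²t²/2)). Equivalently, the momentum variance of the evolved state is ℏ(g/2 + σ²t) and its symmetrized position–momentum covariance is ℏ(gt/2 + σ²t²/2). -/
/-!
At `η = 0` everything collapses: `u = 1`, `v = 1 + βt`, `P = p₀` and `Q = φ = D = 0`, so `χ(t,·,0)`
is the Gaussian `exp(i p₀ ξ/ℏ - g(1+βt) ξ²/(4ℏ))`, whose second derivative is read off. For the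
mixed derivative write `χ = K(η) · exp(B(η) ξ + C(η) ξ²)` (`prefactor`, `linCoeff`, `quadCoeff`);
then `∂_η∂_ξ χ(t,0,0) = K'(0) B(0) + K(0) B'(0)`. The functions `sh(t,·)` and `ch(t,·)` are even and
differentiable at `ω = 0` (`sh(t,·)` is the difference quotient at `0` of the analytic
`ω ↦ sinh(ωt)`, and `ch(t,ω) = 2 sh(t/2,ω)²`), hence stationary there. So `u, v, a, P, D` are
stationary at `η = 0` and only the odd coefficients contribute, with
`Q'(0) = -(t + βt²/2)/(1+βt)` and `φ'(0) = βp₀t²/(2(1+βt))`. Finally `gβ = 2σ²` turns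
`g(1+βt)/2` into `g/2 + σ²t`.
-/

open Real
open scoped Complex

theorem hasDerivAt_zero_of_even {E : Type*} [NormedAddCommGroup E] [NormedSpace ℝ E] {f : ℝ → E}
    (hf : DifferentiableAt ℝ f 0) (heven : Function.Even f) : HasDerivAt f 0 0 := by
  have h := deriv_comp_neg f 0
  simp only [heven _, neg_zero] at h
  have h2 : (2 : ℝ) • deriv f 0 = 0 := by rw [two_smul, neg_eq_iff_add_eq_zero.mp h.symm]
  rw [← (smul_eq_zero.mp h2).resolve_left two_ne_zero]
  exact hf.hasDerivAt

theorem hasDerivAt_cexp_quadratic (b c : ℂ) (x : ℝ) :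
    HasDerivAt (fun ξ : ℝ => cexp (b * ξ + c * ξ ^ 2))
      (cexp (b * x + c * x ^ 2) * (b + 2 * c * x)) x := by
  have hq : HasDerivAt (fun z : ℂ => b * z + c * z ^ 2) (b + 2 * c * x) x := by
    refine (((hasDerivAt_id' (x : ℂ)).const_mul b).fun_add
      (((hasDerivAt_id' (x : ℂ)).fun_pow 2).const_mul c)).congr_deriv ?_
    ring
  exact hq.cexp.comp_ofReal

theorem iteratedDeriv_two_mul_cexp_quadratic (k b c : ℂ) :
    iteratedDeriv 2 (fun ξ : ℝ => k * cexp (b * ξ + c * ξ ^ 2)) 0 = k * (b ^ 2 + 2 * c) := by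
  have hd : deriv (fun ξ : ℝ => k * cexp (b * ξ + c * ξ ^ 2)) =
      fun x : ℝ => k * (cexp (b * x + c * x ^ 2) * (b + 2 * c * x)) :=
    funext fun x => ((hasDerivAt_cexp_quadratic b c x).const_mul k).deriv
  have hlin : HasDerivAt (fun x : ℝ => b + 2 * c * x) (2 * c) 0 := by
    simpa using ((hasDerivAt_id' (0 : ℝ)).ofReal_comp.const_mul (2 * c)).const_add b
  rw [iteratedDeriv_succ, iteratedDeriv_one, hd,
    (((hasDerivAt_cexp_quadratic b c 0).fun_mul hlin).const_mul k).deriv]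
  simp only [Complex.ofReal_zero, mul_zero, add_zero, ne_eq, OfNat.ofNat_ne_zero, not_false_eq_true,
    zero_pow, Complex.exp_zero]
  ring

theorem deriv_deriv_mul_cexp_quadratic {K B C : ℝ → ℂ} {K' B' : ℂ} (hK : HasDerivAt K K' 0)
    (hB : HasDerivAt B B' 0) :
    deriv (fun η => deriv (fun ξ : ℝ => K η * cexp (B η * ξ + C η * ξ ^ 2)) 0) 0 =
      K' * B 0 + K 0 * B' := by
  have hd : (fun η => deriv (fun ξ : ℝ => K η * cexp (B η * ξ + C η * ξ ^ 2)) 0) =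
      fun η => K η * B η :=
    funext fun η => by simp [((hasDerivAt_cexp_quadratic (B η) (C η) 0).const_mul (K η)).deriv]
  rw [hd, (hK.fun_mul hB).deriv]

namespace LindbladGaussian

noncomputable section

def sh (t ω : ℝ) : ℝ := if ω = 0 then t else sinh (ω * t) / ω

def ch (t ω : ℝ) : ℝ := if ω = 0 then t ^ 2 / 2 else (cosh (ω * t) - 1) / ω ^ 2

section

variable (σ γ g β p₀ : ℝ)

def u (t η : ℝ) : ℝ := cosh (σ * γ * η * t) + ((σ * γ * η) ^ 2 / β) * sh t (σ * γ * η)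

def v (t η : ℝ) : ℝ := cosh (σ * γ * η * t) + β * sh t (σ * γ * η)

def a (t η : ℝ) : ℝ := g * v σ γ β t η / u σ γ β t η

def P (t η : ℝ) : ℝ := p₀ / u σ γ β t η

def Q (t η : ℝ) : ℝ := -η * (β * ch t (σ * γ * η) + sh t (σ * γ * η)) / v σ γ β t η

def φ (t η : ℝ) : ℝ := β * p₀ * η * ch t (σ * γ * η) / v σ γ β t η

def D (t η : ℝ) : ℝ :=
  (1 / (2 * γ ^ 2)) *
      ((t * v σ γ β t η - sh t (σ * γ * η) - 2 * β * ch t (σ * γ * η)) / v σ γ β t η)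
    + (γ ^ 2 * η ^ 2 * p₀ ^ 2 / 2) * (sh t (σ * γ * η) / u σ γ β t η)

end

section

variable (t : ℝ)

@[simp] theorem sh_zero : sh t 0 = t := if_pos rfl

@[simp] theorem ch_zero : ch t 0 = t ^ 2 / 2 := if_pos rfl

theorem sh_eq_dslope : sh t = dslope (fun ω => sinh (ω * t)) 0 := by
  ext ω
  rcases eq_or_ne ω 0 with rfl | hω
  · simp [sh]
  · simp [sh, hω, dslope_of_ne, slope_def_field, div_eq_inv_mul]

theorem sh_even : Function.Even (sh t) := by
  intro ω
  unfold sh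
  split_ifs <;> simp_all [neg_mul, sinh_neg, neg_div_neg_eq]

theorem hasDerivAt_sh_zero : HasDerivAt (sh t) 0 0 := by
  refine hasDerivAt_zero_of_even ?_ (sh_even t)
  obtain ⟨p, hp⟩ : AnalyticAt ℝ (fun ω => sinh (ω * t)) 0 := by fun_prop
  rw [sh_eq_dslope]
  exact hp.has_fpower_series_dslope_fslope.differentiableAt

theorem ch_eq_two_mul_sh_sq (ω : ℝ) : ch t ω = 2 * sh (t / 2) ω ^ 2 := by
  unfold ch sh
  split_ifs with hω
  · ring
  · have h := cosh_two_mul (ω * (t / 2))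
    rw [show 2 * (ω * (t / 2)) = ω * t by ring, cosh_sq] at h
    rw [h]; field_simp; ring

theorem hasDerivAt_ch_zero : HasDerivAt (ch t) 0 0 := by
  rw [show ch t = fun ω => 2 * sh (t / 2) ω ^ 2 from funext (ch_eq_two_mul_sh_sq t)]
  simpa using ((hasDerivAt_sh_zero (t / 2)).pow 2).const_mul 2

theorem hasDerivAt_sh_mul (c : ℝ) : HasDerivAt (fun η => sh t (c * η)) 0 0 := by
  simpa [Function.comp_def] using
    (hasDerivAt_sh_zero t).comp_of_eq 0 ((hasDerivAt_id' 0).const_mul c) (by simp)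

theorem hasDerivAt_ch_mul (c : ℝ) : HasDerivAt (fun η => ch t (c * η)) 0 0 := by
  simpa [Function.comp_def] using
    (hasDerivAt_ch_zero t).comp_of_eq 0 ((hasDerivAt_id' 0).const_mul c) (by simp)

theorem hasDerivAt_cosh_mul_mul (c : ℝ) : HasDerivAt (fun η => cosh (c * η * t)) 0 0 := by
  simpa [Function.comp_def] using
    (hasDerivAt_cosh _).comp 0 (((hasDerivAt_id' 0).const_mul c).mul_const t)

end

section

variable (σ γ g β p₀ t : ℝ)

@[simp] theorem u_zero : u σ γ β t 0 = 1 := by simp [u]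
@[simp] theorem v_zero : v σ γ β t 0 = 1 + β * t := by simp [v]
@[simp] theorem a_zero : a σ γ g β t 0 = g * (1 + β * t) := by simp [a]
@[simp] theorem P_zero : P σ γ β p₀ t 0 = p₀ := by simp [P]
@[simp] theorem Q_zero : Q σ γ β t 0 = 0 := by simp [Q]
@[simp] theorem φ_zero : φ σ γ β p₀ t 0 = 0 := by simp [φ]
@[simp] theorem D_zero : D σ γ β p₀ t 0 = 0 := by
  simp only [D, v_zero, mul_zero, sh_zero, ch_zero]
  rw [show t * (1 + β * t) - t - 2 * β * (t ^ 2 / 2) = 0 by ring]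
  simp

theorem hasDerivAt_u : HasDerivAt (u σ γ β t) 0 0 := by
  have hω := ((hasDerivAt_id' (0:ℝ)).const_mul (σ * γ)).pow 2 |>.div_const β
  unfold u
  simpa using
    (hasDerivAt_cosh_mul_mul t (σ * γ)).fun_add (hω.fun_mul (hasDerivAt_sh_mul t (σ * γ)))

theorem hasDerivAt_v : HasDerivAt (v σ γ β t) 0 0 := by
  unfold v
  simpa using
    (hasDerivAt_cosh_mul_mul t (σ * γ)).fun_add ((hasDerivAt_sh_mul t (σ * γ)).const_mul β)

theorem hasDerivAt_a : HasDerivAt (a σ γ g β t) 0 0 := by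
  unfold a
  simpa using ((hasDerivAt_v σ γ β t).const_mul g).fun_div (hasDerivAt_u σ γ β t) (by simp)

theorem hasDerivAt_P : HasDerivAt (P σ γ β p₀ t) 0 0 := by
  unfold P
  simpa using (hasDerivAt_const 0 p₀).fun_div (hasDerivAt_u σ γ β t) (by simp)

theorem hasDerivAt_Q (h : 1 + β * t ≠ 0) :
    HasDerivAt (Q σ γ β t) (-(β * (t ^ 2 / 2) + t) / (1 + β * t)) 0 := by
  have hnum := (hasDerivAt_id' (0:ℝ)).fun_neg.fun_mul
    (((hasDerivAt_ch_mul t (σ * γ)).const_mul β).fun_add (hasDerivAt_sh_mul t (σ * γ)))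
  unfold Q
  refine (hnum.fun_div (hasDerivAt_v σ γ β t) (by simpa using h)).congr_deriv ?_
  simp only [mul_zero, ch_zero, sh_zero, neg_mul, one_mul, neg_add_rev, neg_zero, add_zero, v_zero,
    zero_mul, sub_zero]
  field_simp

theorem hasDerivAt_φ (h : 1 + β * t ≠ 0) :
    HasDerivAt (φ σ γ β p₀ t) (β * p₀ * (t ^ 2 / 2) / (1 + β * t)) 0 := by
  have hnum := ((hasDerivAt_id' (0:ℝ)).const_mul (β * p₀)).fun_mul (hasDerivAt_ch_mul t (σ * γ))
  unfold φ
  refine (hnum.fun_div (hasDerivAt_v σ γ β t) (by simpa using h)).congr_deriv ?_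
  simp only [mul_one, mul_zero, ch_zero, add_zero, v_zero, zero_mul, sub_zero]
  field_simp

theorem hasDerivAt_D (h : 1 + β * t ≠ 0) : HasDerivAt (D σ γ β p₀ t) 0 0 := by
  have hS := hasDerivAt_sh_mul t (σ * γ)
  have h₁ := ((((hasDerivAt_v σ γ β t).const_mul t).fun_sub hS).fun_sub
    ((hasDerivAt_ch_mul t (σ * γ)).const_mul (2 * β))).fun_div (hasDerivAt_v σ γ β t)
    (by simpa using h)
  have h₂ := (((hasDerivAt_id' (0:ℝ)).fun_pow 2).const_mul (γ ^ 2) |>.mul_const (p₀ ^ 2)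
    |>.div_const 2).fun_mul (hS.fun_div (hasDerivAt_u σ γ β t) (by simp))
  unfold D
  refine ((h₁.const_mul (1 / (2 * γ ^ 2))).fun_add h₂).congr_deriv ?_
  simp

end

section

variable (hbar σ γ g β p₀ q₀ : ℝ)

def χ (t ξ η : ℝ) : ℂ :=
  ((Real.sqrt (u σ γ β t η))⁻¹ : ℝ) * Complex.exp (-(D σ γ β p₀ t η : ℂ) / (hbar : ℂ)) *
    Complex.exp ((Complex.I / (hbar : ℂ)) *
      ((φ σ γ β p₀ t η + q₀ * η + P σ γ β p₀ t η * (ξ - Q σ γ β t η) : ℝ) : ℂ)) *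
    Complex.exp (((-(η ^ 2 / (4 * hbar * g)) -
      a σ γ g β t η * (ξ - Q σ γ β t η) ^ 2 / (4 * hbar) : ℝ) : ℂ))

def prefactor (t η : ℝ) : ℂ :=
  ((√(u σ γ β t η))⁻¹ : ℝ) *
    cexp (((-D σ γ β p₀ t η / hbar - η ^ 2 / (4 * hbar * g)
        - a σ γ g β t η * Q σ γ β t η ^ 2 / (4 * hbar) : ℝ) : ℂ)
      + Complex.I * ((φ σ γ β p₀ t η + q₀ * η - P σ γ β p₀ t η * Q σ γ β t η) / hbar : ℝ))

def linCoeff (t η : ℝ) : ℂ :=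
  ((a σ γ g β t η * Q σ γ β t η / (2 * hbar) : ℝ) : ℂ) +
    Complex.I * ((P σ γ β p₀ t η / hbar : ℝ) : ℂ)

def quadCoeff (t η : ℝ) : ℂ := ((-a σ γ g β t η / (4 * hbar) : ℝ) : ℂ)

variable (t : ℝ)

theorem χ_eq_prefactor_mul_cexp (ξ η : ℝ) :
    χ hbar σ γ g β p₀ q₀ t ξ η = prefactor hbar σ γ g β p₀ q₀ t η *
      cexp (linCoeff hbar σ γ g β p₀ t η * ξ + quadCoeff hbar σ γ g β t η * ξ ^ 2) := by
  simp only [χ, prefactor, linCoeff, quadCoeff, mul_assoc, ← Complex.exp_add]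
  congr 2
  push_cast
  ring

@[simp] theorem prefactor_zero : prefactor hbar σ γ g β p₀ q₀ t 0 = 1 := by simp [prefactor]

@[simp] theorem linCoeff_zero : linCoeff hbar σ γ g β p₀ t 0 = Complex.I * (p₀ / hbar : ℝ) := by
  simp [linCoeff]

@[simp] theorem quadCoeff_zero :
    quadCoeff hbar σ γ g β t 0 = (-(g * (1 + β * t)) / (4 * hbar) : ℝ) := by
  simp [quadCoeff]

theorem hasDerivAt_prefactor (h : 1 + β * t ≠ 0) :
    HasDerivAt (prefactor hbar σ γ g β p₀ q₀ t) (Complex.I * ((q₀ + t * p₀) / hbar : ℝ)) 0 := by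
  have hQ := hasDerivAt_Q σ γ β t h
  have hr := ((hasDerivAt_u σ γ β t).sqrt (by simp)).fun_inv (by simp)
  have hdecay : HasDerivAt (fun η => -D σ γ β p₀ t η / hbar - η ^ 2 / (4 * hbar * g)
      - a σ γ g β t η * Q σ γ β t η ^ 2 / (4 * hbar)) 0 0 := by
    refine ((((hasDerivAt_D σ γ β p₀ t h).fun_neg.div_const hbar).fun_sub
      (((hasDerivAt_id' (0:ℝ)).fun_pow 2).div_const (4 * hbar * g))).fun_sub
      (((hasDerivAt_a σ γ g β t).fun_mul (hQ.fun_pow 2)).div_const (4 * hbar))).congr_deriv ?_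
    simp
  have hphase : HasDerivAt
      (fun η => (φ σ γ β p₀ t η + q₀ * η - P σ γ β p₀ t η * Q σ γ β t η) / hbar)
      ((q₀ + t * p₀) / hbar) 0 := by
    refine ((((hasDerivAt_φ σ γ β p₀ t h).fun_add ((hasDerivAt_id' (0:ℝ)).const_mul q₀)).fun_sub
      ((hasDerivAt_P σ γ β p₀ t).fun_mul hQ)).div_const hbar).congr_deriv ?_
    simp only [mul_one, Q_zero, mul_zero, P_zero, neg_add_rev, zero_add]
    field_simp
    ring
  unfold prefactor
  refine (hr.ofReal_comp.fun_mul
    (hdecay.ofReal_comp.fun_add (hphase.ofReal_comp.const_mul Complex.I)).cexp).congr_deriv ?_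
  simp

theorem hasDerivAt_linCoeff (h : 1 + β * t ≠ 0) :
    HasDerivAt (linCoeff hbar σ γ g β p₀ t)
      ((-(g * (t + β * t ^ 2 / 2)) / (2 * hbar) : ℝ) : ℂ) 0 := by
  have hre : HasDerivAt (fun η => a σ γ g β t η * Q σ γ β t η / (2 * hbar))
      (-(g * (t + β * t ^ 2 / 2)) / (2 * hbar)) 0 := by
    refine (((hasDerivAt_a σ γ g β t).fun_mul (hasDerivAt_Q σ γ β t h)).div_const
      (2 * hbar)).congr_deriv ?_
    simp only [Q_zero, mul_zero, a_zero, neg_add_rev, zero_add]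
    field_simp
    ring
  unfold linCoeff
  refine (hre.ofReal_comp.fun_add
    (((hasDerivAt_P σ γ β p₀ t).div_const hbar).ofReal_comp.const_mul Complex.I)).congr_deriv ?_
  simp

theorem iteratedDeriv_two_χ (hbar0 : hbar ≠ 0) :
    iteratedDeriv 2 (fun ξ => χ hbar σ γ g β p₀ q₀ t ξ 0) 0 =
      -(1 / (hbar : ℂ) ^ 2) * ((p₀ ^ 2 + hbar * (g * (1 + β * t) / 2) : ℝ) : ℂ) := by
  simp only [χ_eq_prefactor_mul_cexp, iteratedDeriv_two_mul_cexp_quadratic, prefactor_zero,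
    linCoeff_zero, quadCoeff_zero]
  have : (hbar : ℂ) ≠ 0 := by exact_mod_cast hbar0
  push_cast
  field_simp
  linear_combination (8 * p₀ ^ 2 : ℂ) * Complex.I_sq

theorem deriv_deriv_χ (hbar0 : hbar ≠ 0) (h : 1 + β * t ≠ 0) :
    deriv (fun η => deriv (fun ξ => χ hbar σ γ g β p₀ q₀ t ξ η) 0) 0 =
      -(1 / (hbar : ℂ) ^ 2) *
        ((p₀ * (q₀ + t * p₀) + hbar * (g * (t + β * t ^ 2 / 2) / 2) : ℝ) : ℂ) := by
  simp only [χ_eq_prefactor_mul_cexp]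
  rw [deriv_deriv_mul_cexp_quadratic (hasDerivAt_prefactor hbar σ γ g β p₀ q₀ t h)
    (hasDerivAt_linCoeff hbar σ γ g β p₀ t h)]
  simp only [prefactor_zero, linCoeff_zero]
  have : (hbar : ℂ) ≠ 0 := by exact_mod_cast hbar0
  push_cast
  field_simp
  linear_combination (4 * p₀ * (q₀ + t * p₀) : ℂ) * Complex.I_sq

end

end

end LindbladGaussian

theorem stmt12_general (hbar σ γ g p₀ q₀ : ℝ)
    (hhbar : 0 < hbar) (hg : 0 < g)
    (β : ℝ) (hβ : β = 2 * σ ^ 2 / g)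
    (sh ch : ℝ → ℝ → ℝ)
    (hsh : ∀ t ω, sh t ω = if ω = 0 then t else Real.sinh (ω * t) / ω)
    (hch : ∀ t ω, ch t ω = if ω = 0 then t ^ 2 / 2 else (Real.cosh (ω * t) - 1) / ω ^ 2)
    (u v a P Q φ D : ℝ → ℝ → ℝ) (χ : ℝ → ℝ → ℝ → ℂ)
    (hu : ∀ t η, u t η = Real.cosh (σ * γ * η * t) + ((σ * γ * η) ^ 2 / β) * sh t (σ * γ * η))
    (hv : ∀ t η, v t η = Real.cosh (σ * γ * η * t) + β * sh t (σ * γ * η))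
    (ha : ∀ t η, a t η = g * v t η / u t η)
    (hP : ∀ t η, P t η = p₀ / u t η)
    (hQ : ∀ t η, Q t η = -η * (β * ch t (σ * γ * η) + sh t (σ * γ * η)) / v t η)
    (hφ : ∀ t η, φ t η = β * p₀ * η * ch t (σ * γ * η) / v t η)
    (hD : ∀ t η, D t η =
      (1 / (2 * γ ^ 2)) *
          ((t * v t η - sh t (σ * γ * η) - 2 * β * ch t (σ * γ * η)) / v t η)
        + (γ ^ 2 * η ^ 2 * p₀ ^ 2 / 2) * (sh t (σ * γ * η) / u t η))
    (hχ : ∀ t ξ η, χ t ξ η =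
      ((Real.sqrt (u t η))⁻¹ : ℝ) * Complex.exp (-(D t η : ℂ) / (hbar : ℂ)) *
        Complex.exp ((Complex.I / (hbar : ℂ)) *
          ((φ t η + q₀ * η + P t η * (ξ - Q t η) : ℝ) : ℂ)) *
        Complex.exp (((-(η ^ 2 / (4 * hbar * g)) - a t η * (ξ - Q t η) ^ 2 / (4 * hbar) : ℝ) : ℂ))) :
    ∀ t ≥ 0,
      iteratedDeriv 2 (fun ξ => χ t ξ 0) 0 =
        -(1 / (hbar : ℂ) ^ 2) * ((p₀ ^ 2 + hbar * (g / 2 + σ ^ 2 * t) : ℝ) : ℂ) ∧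
      deriv (fun η => deriv (fun ξ => χ t ξ η) 0) 0 =
        -(1 / (hbar : ℂ) ^ 2) *
          ((p₀ * (q₀ + t * p₀) + hbar * (g * t / 2 + σ ^ 2 * t ^ 2 / 2) : ℝ) : ℂ) := by
  intro t ht
  obtain rfl : sh = LindbladGaussian.sh := funext₂ hsh
  obtain rfl : ch = LindbladGaussian.ch := funext₂ hch
  obtain rfl : u = LindbladGaussian.u σ γ β := funext₂ hu
  obtain rfl : v = LindbladGaussian.v σ γ β := funext₂ hv
  obtain rfl : a = LindbladGaussian.a σ γ g β := funext₂ ha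
  obtain rfl : P = LindbladGaussian.P σ γ β p₀ := funext₂ hP
  obtain rfl : Q = LindbladGaussian.Q σ γ β := funext₂ hQ
  obtain rfl : φ = LindbladGaussian.φ σ γ β p₀ := funext₂ hφ
  obtain rfl : D = LindbladGaussian.D σ γ β p₀ := funext₂ hD
  obtain rfl : χ = LindbladGaussian.χ hbar σ γ g β p₀ q₀ := funext₃ hχ
  have hgβ : g * β = 2 * σ ^ 2 := by rw [hβ]; field_simp
  have hβt : 1 + β * t ≠ 0 := by rw [hβ]; positivity
  rw [LindbladGaussian.iteratedDeriv_two_χ _ _ _ _ _ _ _ _ hhbar.ne',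
    LindbladGaussian.deriv_deriv_χ _ _ _ _ _ _ _ _ hhbar.ne' hβt]
  constructor <;> congr 3
  · linear_combination hbar * t / 2 * hgβ
  · linear_combination hbar * t ^ 2 / 4 * hgβ

/-- Second moments of the evolved state: the characteristic function
`χ(t,ξ,η)` satisfies `∂_ξ²χ(t,0,0) = −(1/ℏ²)(p₀² + ℏ(g/2 + σ²t))` and
`∂_η∂_ξχ(t,0,0) = −(1/ℏ²)(p₀(q₀+tp₀) + ℏ(gt/2 + σ²t²/2))`, i.e. the momentum
variance is `ℏ(g/2 + σ²t)` and the symmetrized covariance is `ℏ(gt/2 + σ²t²/2)`. -/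
theorem stmt12 (hbar σ γ g p₀ q₀ : ℝ)
    (hhbar : 0 < hbar) (hσ : 0 < σ) (hγ : 0 < γ) (hg : 0 < g)
    (β : ℝ) (hβ : β = 2 * σ ^ 2 / g)
    (sh ch : ℝ → ℝ → ℝ)
    (hsh : ∀ t ω, sh t ω = if ω = 0 then t else Real.sinh (ω * t) / ω)
    (hch : ∀ t ω, ch t ω = if ω = 0 then t ^ 2 / 2 else (Real.cosh (ω * t) - 1) / ω ^ 2)
    (u v a P Q φ D : ℝ → ℝ → ℝ) (χ : ℝ → ℝ → ℝ → ℂ)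
    (hu : ∀ t η, u t η = Real.cosh (σ * γ * η * t) + ((σ * γ * η) ^ 2 / β) * sh t (σ * γ * η))
    (hv : ∀ t η, v t η = Real.cosh (σ * γ * η * t) + β * sh t (σ * γ * η))
    (ha : ∀ t η, a t η = g * v t η / u t η)
    (hP : ∀ t η, P t η = p₀ / u t η)
    (hQ : ∀ t η, Q t η = -η * (β * ch t (σ * γ * η) + sh t (σ * γ * η)) / v t η)
    (hφ : ∀ t η, φ t η = β * p₀ * η * ch t (σ * γ * η) / v t η)
    (hD : ∀ t η, D t η =
      (1 / (2 * γ ^ 2)) *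
          ((t * v t η - sh t (σ * γ * η) - 2 * β * ch t (σ * γ * η)) / v t η)
        + (γ ^ 2 * η ^ 2 * p₀ ^ 2 / 2) * (sh t (σ * γ * η) / u t η))
    (hχ : ∀ t ξ η, χ t ξ η =
      ((Real.sqrt (u t η))⁻¹ : ℝ) * Complex.exp (-(D t η : ℂ) / (hbar : ℂ)) *
        Complex.exp ((Complex.I / (hbar : ℂ)) *
          ((φ t η + q₀ * η + P t η * (ξ - Q t η) : ℝ) : ℂ)) *
        Complex.exp (((-(η ^ 2 / (4 * hbar * g)) - a t η * (ξ - Q t η) ^ 2 / (4 * hbar) : ℝ) : ℂ))) :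
    ∀ t ≥ 0,
      iteratedDeriv 2 (fun ξ => χ t ξ 0) 0 =
        -(1 / (hbar : ℂ) ^ 2) * ((p₀ ^ 2 + hbar * (g / 2 + σ ^ 2 * t) : ℝ) : ℂ) ∧
      deriv (fun η => deriv (fun ξ => χ t ξ η) 0) 0 =
        -(1 / (hbar : ℂ) ^ 2) *
          ((p₀ * (q₀ + t * p₀) + hbar * (g * t / 2 + σ ^ 2 * t ^ 2 / 2) : ℝ) : ℂ) :=
  stmt12_general hbar σ γ g p₀ q₀ hhbar hg β hβ sh ch hsh hch u v a P Q φ D χ hu hv ha hP hQ hφ hD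
    hχ
end

section
/- Let ℏ > 0 and ω > 0. Define A : ℝ × ℝ² → ℝ by A(β,p,q) = (1/cosh(ωℏβ/2))·exp(−(tanh(ωℏβ/2)/ℏ)·(p² + q²)). Then A(0,p,q) = 1 for all (p,q) ∈ ℝ², and for all β ∈ ℝ and (p,q) ∈ ℝ², ∂_βA(β,p,q) = −(ω/2)(p² + q²)·A(β,p,q) + (ℏ²ω/8)·(∂_p²A(β,p,q) + ∂_q²A(β,p,q)). -/
/-!
Write `t = ωℏβ/2`, so that `A = sech t · exp(-tanh t · r)` with `r = (p² + q²)/ℏ`.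
Since `sech' = -tanh · sech` and `tanh' = 1 - tanh²`, the logarithmic β-derivative of `A` is
`-(ωℏ/2)(tanh t + (1 - tanh² t) r)`, while a Gaussian `exp(-k x²)` has second derivative
`(4k²x² - 2k) exp(-k x²)`. With `k = tanh t / ℏ` both sides of the equation become polynomial
in `tanh t` times `A`, and they agree identically.
-/

open Real

namespace Real

theorem hasDerivAt_tanh (x : ℝ) : HasDerivAt tanh (1 - tanh x ^ 2) x := by
  rw [show tanh = fun y => sinh y / cosh y from funext tanh_eq_sinh_div_cosh]
  refine ((hasDerivAt_sinh x).div (hasDerivAt_cosh x) (cosh_pos x).ne').congr_deriv ?_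
  field_simp

theorem hasDerivAt_inv_cosh (x : ℝ) :
    HasDerivAt (fun y => (cosh y)⁻¹) (-(tanh x * (cosh x)⁻¹)) x := by
  refine ((hasDerivAt_cosh x).inv (cosh_pos x).ne').congr_deriv ?_
  rw [tanh_eq_sinh_div_cosh]
  field_simp

end Real

theorem hasDerivAt_inv_cosh_mul_exp_neg_tanh_mul (r t : ℝ) :
    HasDerivAt (fun s => (cosh s)⁻¹ * exp (-(tanh s * r)))
      (-(tanh t + (1 - tanh t ^ 2) * r) * ((cosh t)⁻¹ * exp (-(tanh t * r)))) t :=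
  ((hasDerivAt_inv_cosh t).mul (((hasDerivAt_tanh t).mul_const r).fun_neg.exp)).congr_deriv
    (by ring)

theorem iteratedDeriv_two_exp_neg_mul_sq_add (k s x : ℝ) :
    iteratedDeriv 2 (fun y => exp (-k * (y ^ 2 + s))) x
      = (4 * k ^ 2 * x ^ 2 - 2 * k) * exp (-k * (x ^ 2 + s)) := by
  have hderiv (y : ℝ) :
      HasDerivAt (fun y => exp (-k * (y ^ 2 + s))) (-2 * k * y * exp (-k * (y ^ 2 + s))) y :=
    ((((hasDerivAt_pow 2 y).add_const s).const_mul (-k)).exp).congr_deriv (by ring)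
  have hderiv₂ : HasDerivAt (fun y => -2 * k * y * exp (-k * (y ^ 2 + s)))
      ((4 * k ^ 2 * x ^ 2 - 2 * k) * exp (-k * (x ^ 2 + s))) x :=
    (((hasDerivAt_id x).const_mul (-2 * k)).mul (hderiv x)).congr_deriv (by simp only [id]; ring)
  rw [iteratedDeriv_succ, iteratedDeriv_one, funext fun y => (hderiv y).deriv, hderiv₂.deriv]

theorem stmt15_general (hbar ω : ℝ) (hhbar : 0 < hbar)
    (A : ℝ → ℝ → ℝ → ℝ)
    (hA : ∀ β p q, A β p q =
      (1 / Real.cosh (ω * hbar * β / 2)) *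
        Real.exp (-(Real.tanh (ω * hbar * β / 2) / hbar) * (p ^ 2 + q ^ 2))) :
    (∀ p q : ℝ, A 0 p q = 1) ∧
    ∀ (β p q : ℝ),
      deriv (fun β' => A β' p q) β =
        -(ω / 2) * (p ^ 2 + q ^ 2) * A β p q
          + hbar ^ 2 * ω / 8 *
            (iteratedDeriv 2 (fun p' => A β p' q) p + iteratedDeriv 2 (fun q' => A β p q') q) := by
  refine ⟨fun p q => by simp [hA], fun β p q => ?_⟩
  set t := ω * hbar * β / 2
  have hA_eq (β' : ℝ) : A β' p q = (cosh (ω * hbar * β' / 2))⁻¹ *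
      exp (-(tanh (ω * hbar * β' / 2) * ((p ^ 2 + q ^ 2) / hbar))) := by
    rw [hA, one_div, neg_mul, div_mul_eq_mul_div, mul_div_assoc (tanh _)]
  have hβ : HasDerivAt (fun β' => A β' p q)
      (-(tanh t + (1 - tanh t ^ 2) * ((p ^ 2 + q ^ 2) / hbar)) * A β p q * (ω * hbar / 2))
      β := by
    rw [funext hA_eq, hA_eq]
    exact (hasDerivAt_inv_cosh_mul_exp_neg_tanh_mul _ t).comp β
      (by simpa using ((hasDerivAt_id β).const_mul (ω * hbar)).div_const 2)
  have hp : iteratedDeriv 2 (fun p' => A β p' q) p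
      = (4 * (tanh t / hbar) ^ 2 * p ^ 2 - 2 * (tanh t / hbar)) * A β p q := by
    simp only [hA]
    rw [iteratedDeriv_const_mul_field, iteratedDeriv_two_exp_neg_mul_sq_add]
    ring
  have hq : iteratedDeriv 2 (fun q' => A β p q') q
      = (4 * (tanh t / hbar) ^ 2 * q ^ 2 - 2 * (tanh t / hbar)) * A β p q := by
    simp only [hA, add_comm (p ^ 2)]
    rw [iteratedDeriv_const_mul_field, iteratedDeriv_two_exp_neg_mul_sq_add]
    ring
  rw [hβ.deriv, hp, hq]
  field_simp
  ring

/-- The Mehler-type function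
`A(β,p,q) = sech(ωℏβ/2)·exp(−(tanh(ωℏβ/2)/ℏ)(p²+q²))`
satisfies `A(0,p,q) = 1` and the Moyal heat equation
`∂_βA = −(ω/2)(p²+q²)A + (ℏ²ω/8)(∂_p²A + ∂_q²A)`. -/
theorem stmt15 (hbar ω : ℝ) (hhbar : 0 < hbar) (hω : 0 < ω)
    (A : ℝ → ℝ → ℝ → ℝ)
    (hA : ∀ β p q, A β p q =
      (1 / Real.cosh (ω * hbar * β / 2)) *
        Real.exp (-(Real.tanh (ω * hbar * β / 2) / hbar) * (p ^ 2 + q ^ 2))) :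
    (∀ p q : ℝ, A 0 p q = 1) ∧
    ∀ (β p q : ℝ),
      deriv (fun β' => A β' p q) β =
        -(ω / 2) * (p ^ 2 + q ^ 2) * A β p q
          + hbar ^ 2 * ω / 8 *
            (iteratedDeriv 2 (fun p' => A β p' q) p + iteratedDeriv 2 (fun q' => A β p q') q) :=
  stmt15_general hbar ω hhbar A hA
end
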